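/- arXiv:2409.10478 — 10 statements merged into one kernel-verified Lean document; each statement's English description precedes it below -/
import Mathlib

section
/- Let E be a real inner product space and let f : E → ℝ be differentiable with gradient ∇f. If f is convex (0-strongly convex) and L-smooth with L > 0, then for all x, y ∈ E: (1/(2L))·‖∇f(x) − ∇f(y)‖² ≤ f(y) − f(x) − ⟨∇f(x), y − x⟩. -/
open RealInnerProductSpace

/-- Corollary 1 (Nesterov cocoercivity bound): if `f` is convex (0-strongly convex)
and `L`-smooth with gradient `f'`, then
`1/(2L) * ‖∇f(x) − ∇f(y)‖² ≤ f(y) − f(x) − ⟨∇f(x), y − x⟩`. -/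
theorem stmt_0 {E : Type*} [NormedAddCommGroup E] [InnerProductSpace ℝ E] [CompleteSpace E]
    (f : E → ℝ) (f' : E → E) (L : ℝ) (hL : 0 < L)
    (hdiff : ∀ x, HasGradientAt f (f' x) x)
    (hconv : ∀ x y : E, 0 ≤ f y - f x - ⟪f' x, y - x⟫)
    (hsmooth : ∀ x y : E, f y - f x - ⟪f' x, y - x⟫ ≤ L / 2 * ‖x - y‖ ^ 2) :
    ∀ x y : E, 1 / (2 * L) * ‖f' x - f' y‖ ^ 2 ≤ f y - f x - ⟪f' x, y - x⟫ := by
  intro x y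
  set u : E := f' y - f' x with hu
  set z : E := y - L⁻¹ • u with hz
  have h1 := hconv x z
  have h2 := hsmooth y z
  have hzy : z - y = -(L⁻¹ • u) := by rw [hz]; abel
  have hyz : y - z = L⁻¹ • u := by rw [hz]; abel
  have e1 : ⟪f' y, z - y⟫ = -(L⁻¹ * ⟪f' y, u⟫) := by
    rw [hzy, inner_neg_right, real_inner_smul_right]
  have e2 : ‖y - z‖ ^ 2 = L⁻¹ ^ 2 * ‖u‖ ^ 2 := by
    rw [hyz, norm_smul]
    simp [mul_pow, abs_of_pos (inv_pos.mpr hL)]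
  have e3 : ⟪f' x, z - x⟫ = ⟪f' x, y - x⟫ - L⁻¹ * ⟪f' x, u⟫ := by
    have : z - x = (y - x) - L⁻¹ • u := by rw [hz]; abel
    rw [this, inner_sub_right, real_inner_smul_right]
  have e4 : ⟪f' y, u⟫ - ⟪f' x, u⟫ = ‖u‖ ^ 2 := by
    rw [← inner_sub_left, ← hu, real_inner_self_eq_norm_sq]
  have e5 : ‖f' x - f' y‖ = ‖u‖ := by rw [hu, norm_sub_rev]
  rw [e1, e2] at h2
  rw [e3] at h1
  rw [e5]
  have hL' : L ≠ 0 := ne_of_gt hL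
  have e6 : L / 2 * (L⁻¹ ^ 2 * ‖u‖ ^ 2) = L⁻¹ / 2 * ‖u‖ ^ 2 := by
    field_simp
  have e7 : L⁻¹ * ⟪f' y, u⟫ - L⁻¹ * ⟪f' x, u⟫ = L⁻¹ * ‖u‖ ^ 2 := by
    rw [← mul_sub, e4]
  have e8 : (1 : ℝ) / (2 * L) = L⁻¹ / 2 := by field_simp
  rw [e6] at h2
  rw [e8]
  linarith
end

section
/- Let E be a real inner product space, let Q : E → ℝ be differentiable, convex and L_Q-smooth with L_Q > 0, and let R : E → ℝ be differentiable, convex and L_R-smooth with L_R > 0. Let x¹, …, x^M ∈ E with average x̄ = (1/M)Σ_m x^m, set r̄ = (1/M)Σ_m ∇R(x^m) and R̄ = (1/M)Σ_m R(x^m), and let x* ∈ E. Then for every ζ > 0: ‖∇Q(x̄) + r̄ − ∇Q(x*) − ∇R(x*)‖² ≤ 2L_Q(1+ζ)·(Q(x̄) − Q(x*) − ⟨∇Q(x*), x̄ − x*⟩) + 2L_R(1 + 1/ζ)·(R̄ − R(x*) − ⟨∇R(x*), x̄ − x*⟩). -/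
open RealInnerProductSpace

/-- Cocoercivity from convexity + smoothness (inequality form). -/
lemma cocoercive_aux {E : Type*} [NormedAddCommGroup E] [InnerProductSpace ℝ E]
    (f : E → ℝ) (f' : E → E) (L : ℝ) (hL : 0 < L)
    (hconv : ∀ x y : E, 0 ≤ f y - f x - ⟪f' x, y - x⟫)
    (hsmooth : ∀ x y : E, f y - f x - ⟪f' x, y - x⟫ ≤ L / 2 * ‖x - y‖ ^ 2)
    (x y : E) : ‖f' y - f' x‖ ^ 2 ≤ 2 * L * (f y - f x - ⟪f' x, y - x⟫) := by
  set g := f' y - f' x with hg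
  set z := y - L⁻¹ • g with hz
  have h1 := hsmooth y z
  have h2 := hconv x z
  have hyz : y - z = L⁻¹ • g := by simp [hz]
  have hnorm : ‖y - z‖ ^ 2 = L⁻¹ ^ 2 * ‖g‖ ^ 2 := by
    rw [hyz, norm_smul]; simp [mul_pow, abs_of_pos (inv_pos.mpr hL)]
  have hzy : z - y = -(L⁻¹ • g) := by rw [hz]; abel
  have hinner1 : ⟪f' y, z - y⟫ = -(L⁻¹ * ⟪f' y, g⟫) := by
    rw [hzy, inner_neg_right, real_inner_smul_right]
  have hzx : z - x = (y - x) - L⁻¹ • g := by rw [hz]; abel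
  have hinner2 : ⟪f' x, z - x⟫ = ⟪f' x, y - x⟫ - L⁻¹ * ⟪f' x, g⟫ := by
    rw [hzx, inner_sub_right, real_inner_smul_right]
  have hgg : ⟪f' y, g⟫ - ⟪f' x, g⟫ = ‖g‖ ^ 2 := by
    rw [← inner_sub_left, ← hg, real_inner_self_eq_norm_sq]
  rw [hnorm, hinner1] at h1
  rw [hinner2] at h2
  have hLne : L ≠ 0 := ne_of_gt hL
  have e1 : L / 2 * (L⁻¹ ^ 2 * ‖g‖ ^ 2) = L⁻¹ / 2 * ‖g‖ ^ 2 := by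
    field_simp
  rw [e1] at h1
  have h4 : L⁻¹ * ⟪f' y, g⟫ - L⁻¹ * ⟪f' x, g⟫ = L⁻¹ * ‖g‖ ^ 2 := by
    rw [← mul_sub, hgg]
  have h3 : L⁻¹ / 2 * ‖g‖ ^ 2 ≤ f y - f x - ⟪f' x, y - x⟫ := by linarith
  have h5 := mul_le_mul_of_nonneg_left h3 (by linarith : (0:ℝ) ≤ 2 * L)
  have e2 : 2 * L * (L⁻¹ / 2 * ‖g‖ ^ 2) = ‖g‖ ^ 2 := by field_simp
  linarith

/-- Lemma 2: for `Q` convex and `L_Q`-smooth, `R` convex and `L_R`-smooth, and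
any `ζ > 0`, Young's inequality splits the squared norm of the combined gradient
difference into smoothness-weighted Bregman terms of `Q` and `R`. -/
theorem stmt_4 {E : Type*} [NormedAddCommGroup E] [InnerProductSpace ℝ E] [CompleteSpace E]
    (M : ℕ) (hM : 0 < M)
    (Q R : E → ℝ) (Q' R' : E → E) (LQ LR : ℝ) (hLQ : 0 < LQ) (hLR : 0 < LR)
    (hQdiff : ∀ z, HasGradientAt Q (Q' z) z)
    (hRdiff : ∀ z, HasGradientAt R (R' z) z)
    (hQconv : ∀ x y : E, 0 ≤ Q y - Q x - ⟪Q' x, y - x⟫)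
    (hQsmooth : ∀ x y : E, Q y - Q x - ⟪Q' x, y - x⟫ ≤ LQ / 2 * ‖x - y‖ ^ 2)
    (hRconv : ∀ x y : E, 0 ≤ R y - R x - ⟪R' x, y - x⟫)
    (hRsmooth : ∀ x y : E, R y - R x - ⟪R' x, y - x⟫ ≤ LR / 2 * ‖x - y‖ ^ 2)
    (x : Fin M → E) (xstar : E) (xbar rbar : E) (Rbar : ℝ)
    (hxbar : xbar = (M : ℝ)⁻¹ • ∑ m, x m)
    (hrbar : rbar = (M : ℝ)⁻¹ • ∑ m, R' (x m))
    (hRbar : Rbar = (M : ℝ)⁻¹ * ∑ m, R (x m))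
    (ζ : ℝ) (hζ : 0 < ζ) :
    ‖Q' xbar + rbar - Q' xstar - R' xstar‖ ^ 2
      ≤ 2 * LQ * (1 + ζ) * (Q xbar - Q xstar - ⟪Q' xstar, xbar - xstar⟫)
        + 2 * LR * (1 + 1 / ζ) * (Rbar - R xstar - ⟪R' xstar, xbar - xstar⟫) := by
  have hMpos : (0:ℝ) < (M:ℝ) := by exact_mod_cast hM
  have hMne : (M:ℝ) ≠ 0 := ne_of_gt hMpos
  set a := Q' xbar - Q' xstar with ha
  set b := rbar - R' xstar with hb
  have hsplit : Q' xbar + rbar - Q' xstar - R' xstar = a + b := by rw [ha, hb]; abel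
  -- Young's inequality
  have hyoung : ‖a + b‖ ^ 2 ≤ (1 + ζ) * ‖a‖ ^ 2 + (1 + 1/ζ) * ‖b‖ ^ 2 := by
    have hexp : ‖a + b‖ ^ 2 = ‖a‖ ^ 2 + 2 * ⟪a, b⟫ + ‖b‖ ^ 2 := norm_add_sq_real a b
    have hcs : ⟪a, b⟫ ≤ ‖a‖ * ‖b‖ := real_inner_le_norm a b
    have hzz : ζ * (1/ζ) = 1 := mul_one_div_cancel (ne_of_gt hζ)
    nlinarith [sq_nonneg (ζ * ‖a‖ - ‖b‖), hζ, norm_nonneg a, norm_nonneg b]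
  -- bound on ‖a‖²
  have hA : ‖a‖ ^ 2 ≤ 2 * LQ * (Q xbar - Q xstar - ⟪Q' xstar, xbar - xstar⟫) :=
    cocoercive_aux Q Q' LQ hLQ hQconv hQsmooth xstar xbar
  -- bound on ‖b‖²
  have hB : ‖b‖ ^ 2 ≤ 2 * LR * (Rbar - R xstar - ⟪R' xstar, xbar - xstar⟫) := by
    have hbsum : b = (M : ℝ)⁻¹ • ∑ m, (R' (x m) - R' xstar) := by
      rw [hb, hrbar, Finset.sum_sub_distrib, smul_sub, Finset.sum_const, Finset.card_univ,
        Fintype.card_fin, ← Nat.cast_smul_eq_nsmul ℝ, smul_smul,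
        inv_mul_cancel₀ hMne, one_smul]
    have hb1 : ‖b‖ ≤ (M : ℝ)⁻¹ * ∑ m, ‖R' (x m) - R' xstar‖ := by
      rw [hbsum, norm_smul]
      gcongr
      · simp [abs_of_pos (inv_pos.mpr hMpos), le_refl]
      · exact norm_sum_le _ _
    have hb2 : ‖b‖ ^ 2 ≤ (M : ℝ)⁻¹ ^ 2 * (∑ m, ‖R' (x m) - R' xstar‖) ^ 2 := by
      rw [← mul_pow]
      exact pow_le_pow_left₀ (norm_nonneg _) hb1 2
    have hb3 : (∑ m, ‖R' (x m) - R' xstar‖) ^ 2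
        ≤ (M : ℝ) * ∑ m, ‖R' (x m) - R' xstar‖ ^ 2 := by
      have h := sq_sum_le_card_mul_sum_sq (s := (Finset.univ : Finset (Fin M)))
        (f := fun m => ‖R' (x m) - R' xstar‖)
      simpa using h
    have hb4 : ∀ m, ‖R' (x m) - R' xstar‖ ^ 2
        ≤ 2 * LR * (R (x m) - R xstar - ⟪R' xstar, x m - xstar⟫) := fun m =>
      cocoercive_aux R R' LR hLR hRconv hRsmooth xstar (x m)
    have hsum : ∑ m, ‖R' (x m) - R' xstar‖ ^ 2
        ≤ 2 * LR * ∑ m, (R (x m) - R xstar - ⟪R' xstar, x m - xstar⟫) := by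
      rw [Finset.mul_sum]
      exact Finset.sum_le_sum fun m _ => hb4 m
    have hbreg : ∑ m, (R (x m) - R xstar - ⟪R' xstar, x m - xstar⟫)
        = (M : ℝ) * (Rbar - R xstar - ⟪R' xstar, xbar - xstar⟫) := by
      have h2 : ⟪R' xstar, xbar - xstar⟫
          = (M:ℝ)⁻¹ * ∑ m, ⟪R' xstar, x m - xstar⟫ := by
        have : xbar - xstar = (M:ℝ)⁻¹ • ∑ m, (x m - xstar) := by
          rw [hxbar, Finset.sum_sub_distrib, smul_sub, Finset.sum_const, Finset.card_univ,
            Fintype.card_fin, ← Nat.cast_smul_eq_nsmul ℝ, smul_smul,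
            inv_mul_cancel₀ hMne, one_smul]
        rw [this, real_inner_smul_right, inner_sum]
      rw [Finset.sum_sub_distrib, Finset.sum_sub_distrib, h2, hRbar,
        Finset.sum_const, Finset.card_univ, Fintype.card_fin, nsmul_eq_mul]
      field_simp
    calc ‖b‖ ^ 2 ≤ (M : ℝ)⁻¹ ^ 2 * (∑ m, ‖R' (x m) - R' xstar‖) ^ 2 := hb2
      _ ≤ (M : ℝ)⁻¹ ^ 2 * ((M : ℝ) * ∑ m, ‖R' (x m) - R' xstar‖ ^ 2) := by
          gcongr
      _ ≤ (M : ℝ)⁻¹ ^ 2 * ((M : ℝ) * (2 * LR * ∑ m, (R (x m) - R xstar - ⟪R' xstar, x m - xstar⟫))) := by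
          gcongr
      _ = 2 * LR * (Rbar - R xstar - ⟪R' xstar, xbar - xstar⟫) := by
          rw [hbreg]; field_simp
  have hQb : 0 ≤ Q xbar - Q xstar - ⟪Q' xstar, xbar - xstar⟫ := hQconv xstar xbar
  have hRb : 0 ≤ Rbar - R xstar - ⟪R' xstar, xbar - xstar⟫ := by
    nlinarith [hB, sq_nonneg ‖b‖, hLR]
  rw [hsplit]
  calc ‖a + b‖ ^ 2 ≤ (1 + ζ) * ‖a‖ ^ 2 + (1 + 1/ζ) * ‖b‖ ^ 2 := hyoung
    _ ≤ (1 + ζ) * (2 * LQ * (Q xbar - Q xstar - ⟪Q' xstar, xbar - xstar⟫))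
        + (1 + 1/ζ) * (2 * LR * (Rbar - R xstar - ⟪R' xstar, xbar - xstar⟫)) := by
        have h1 : (0:ℝ) ≤ 1 + ζ := by linarith
        have h2 : (0:ℝ) ≤ 1 + 1/ζ := by positivity
        gcongr
    _ = 2 * LQ * (1 + ζ) * (Q xbar - Q xstar - ⟪Q' xstar, xbar - xstar⟫)
        + 2 * LR * (1 + 1/ζ) * (Rbar - R xstar - ⟪R' xstar, xbar - xstar⟫) := by ring
end

section
/- Let E be a real inner product space and let R : E → ℝ be differentiable, μ_R-strongly convex (μ_R ≥ 0) and L_R-smooth with L_R > 0. Let x¹, …, x^M ∈ E with average x̄ = (1/M)Σ_m x^m, set V = (1/M)Σ_m ‖x^m − x̄‖², r̄ = (1/M)Σ_m ∇R(x^m), R̄ = (1/M)Σ_m R(x^m), and let x* ∈ E. Then: −2⟨x̄ − x*, r̄⟩ ≤ −(R̄ − R(x*)) + 2L_R·V − μ_R‖x* − x̄‖² − ⟨∇R(x*), x̄ − x*⟩. -/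
/-!
Each gradient `∇R(xᵐ)` is paired with `x* - x̄ = (x* - xᵐ) - (x̄ - xᵐ)`: strong convexity bounds the
first pairing and smoothness the second, which gives a three-point inequality. Averaging it over
`m` and splitting `(1/M) Σ ‖xᵐ - x*‖² = V + ‖x̄ - x*‖²` bounds `⟨x* - x̄, r̄⟩`. Smoothness at `x̄`
(the first-order term averages out) gives `R̄ ≤ R(x̄) + L V / 2`, and convexity at `x*` bounds
`⟨∇R(x*), x̄ - x*⟩` by `R(x̄) - R(x*)`.
-/

open RealInnerProductSpace Finset

theorem inner_sub_le_of_strongConvex_of_smooth {E : Type*} [NormedAddCommGroup E]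
    [InnerProductSpace ℝ E] {f : E → ℝ} {g : E → E} {μ L : ℝ}
    (hconv : ∀ x y : E, μ / 2 * ‖x - y‖ ^ 2 ≤ f y - f x - ⟪g x, y - x⟫)
    (hsmooth : ∀ x y : E, f y - f x - ⟪g x, y - x⟫ ≤ L / 2 * ‖x - y‖ ^ 2) (x y z : E) :
    ⟪z - y, g x⟫ ≤ f z - f y + L / 2 * ‖x - y‖ ^ 2 - μ / 2 * ‖x - z‖ ^ 2 := by
  have hsplit : ⟪z - y, g x⟫ = ⟪g x, z - x⟫ - ⟪g x, y - x⟫ := by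
    rw [real_inner_comm, ← inner_sub_right, sub_sub_sub_cancel_right]
  linarith [hconv x z, hsmooth x y]

section WeightedAverage

variable {E ι : Type*} [NormedAddCommGroup E] [InnerProductSpace ℝ E]
  {s : Finset ι} {w : ι → ℝ} {x : ι → E}

theorem sum_smul_sub_sum_smul_eq_zero (hw : ∑ i ∈ s, w i = 1) :
    ∑ i ∈ s, w i • (x i - ∑ j ∈ s, w j • x j) = 0 := by
  simp only [smul_sub, sum_sub_distrib, ← sum_smul, hw, one_smul, sub_self]

theorem sum_mul_norm_sub_sq_eq_add {c : E} (hw : ∑ i ∈ s, w i = 1)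
    (hc : ∑ i ∈ s, w i • (x i - c) = 0) (y : E) :
    ∑ i ∈ s, w i * ‖x i - y‖ ^ 2 = ∑ i ∈ s, w i * ‖x i - c‖ ^ 2 + ‖y - c‖ ^ 2 := by
  have hsplit : ∀ i, w i * ‖x i - y‖ ^ 2
      = w i * ‖x i - c‖ ^ 2 - 2 * ⟪w i • (x i - c), y - c⟫ + w i * ‖y - c‖ ^ 2 := by
    intro i
    rw [show x i - y = (x i - c) - (y - c) by abel, norm_sub_sq_real, real_inner_smul_left]
    ring
  simp only [hsplit, sum_add_distrib, sum_sub_distrib, ← mul_sum, ← sum_inner, hc,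
    inner_zero_left, ← sum_mul, hw]
  ring

theorem sum_mul_le_of_smooth {f : E → ℝ} {g : E → E} {L : ℝ} {c : E}
    (hsmooth : ∀ x y : E, f y - f x - ⟪g x, y - x⟫ ≤ L / 2 * ‖x - y‖ ^ 2)
    (hw₀ : ∀ i ∈ s, 0 ≤ w i) (hw : ∑ i ∈ s, w i = 1) (hc : ∑ i ∈ s, w i • (x i - c) = 0) :
    ∑ i ∈ s, w i * f (x i) ≤ f c + L / 2 * ∑ i ∈ s, w i * ‖x i - c‖ ^ 2 := by
  have hpoint : ∀ i ∈ s, w i * f (x i)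
      ≤ w i * f c + ⟪g c, w i • (x i - c)⟫ + L / 2 * (w i * ‖x i - c‖ ^ 2) := by
    intro i hi
    have := mul_le_mul_of_nonneg_left (hsmooth c (x i)) (hw₀ i hi)
    rw [norm_sub_rev, real_inner_smul_right]
    linarith
  calc ∑ i ∈ s, w i * f (x i)
      ≤ ∑ i ∈ s, (w i * f c + ⟪g c, w i • (x i - c)⟫ + L / 2 * (w i * ‖x i - c‖ ^ 2)) :=
        sum_le_sum hpoint
    _ = f c + L / 2 * ∑ i ∈ s, w i * ‖x i - c‖ ^ 2 := by
        rw [sum_add_distrib, sum_add_distrib, ← sum_mul, hw, ← inner_sum, hc, inner_zero_right,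
          ← mul_sum]
        ring

theorem inner_sub_sum_smul_le_of_strongConvex_of_smooth {f : E → ℝ} {g : E → E}
    {μ L : ℝ} {c : E}
    (hconv : ∀ x y : E, μ / 2 * ‖x - y‖ ^ 2 ≤ f y - f x - ⟪g x, y - x⟫)
    (hsmooth : ∀ x y : E, f y - f x - ⟪g x, y - x⟫ ≤ L / 2 * ‖x - y‖ ^ 2)
    (hw₀ : ∀ i ∈ s, 0 ≤ w i) (hw : ∑ i ∈ s, w i = 1) (hc : ∑ i ∈ s, w i • (x i - c) = 0)
    (z : E) :
    ⟪z - c, ∑ i ∈ s, w i • g (x i)⟫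
      ≤ f z - f c + (L - μ) / 2 * ∑ i ∈ s, w i * ‖x i - c‖ ^ 2 - μ / 2 * ‖z - c‖ ^ 2 := by
  have hpoint : ∀ i ∈ s, w i * ⟪z - c, g (x i)⟫
      ≤ w i * (f z - f c) + L / 2 * (w i * ‖x i - c‖ ^ 2) - μ / 2 * (w i * ‖x i - z‖ ^ 2) := by
    intro i hi
    have := mul_le_mul_of_nonneg_left
      (inner_sub_le_of_strongConvex_of_smooth hconv hsmooth (x i) c z) (hw₀ i hi)
    linarith
  calc ⟪z - c, ∑ i ∈ s, w i • g (x i)⟫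
      = ∑ i ∈ s, w i * ⟪z - c, g (x i)⟫ := by simp only [inner_sum, real_inner_smul_right]
    _ ≤ ∑ i ∈ s, (w i * (f z - f c) + L / 2 * (w i * ‖x i - c‖ ^ 2)
          - μ / 2 * (w i * ‖x i - z‖ ^ 2)) := sum_le_sum hpoint
    _ = f z - f c + (L - μ) / 2 * ∑ i ∈ s, w i * ‖x i - c‖ ^ 2 - μ / 2 * ‖z - c‖ ^ 2 := by
        rw [sum_sub_distrib, sum_add_distrib, ← sum_mul, hw, ← mul_sum, ← mul_sum,
          sum_mul_norm_sub_sq_eq_add hw hc z]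
        ring

end WeightedAverage

theorem stmt_5_general {E : Type*} [NormedAddCommGroup E] [InnerProductSpace ℝ E]
    (M : ℕ) (hM : 0 < M)
    (R : E → ℝ) (R' : E → E) (μR LR : ℝ) (hμR : 0 ≤ μR) (hLR : 0 < LR)
    (hRconv : ∀ x y : E, μR / 2 * ‖x - y‖ ^ 2 ≤ R y - R x - ⟪R' x, y - x⟫)
    (hRsmooth : ∀ x y : E, R y - R x - ⟪R' x, y - x⟫ ≤ LR / 2 * ‖x - y‖ ^ 2)
    (x : Fin M → E) (xstar : E) (xbar rbar : E) (Rbar V : ℝ)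
    (hxbar : xbar = (M : ℝ)⁻¹ • ∑ m, x m)
    (hV : V = (M : ℝ)⁻¹ * ∑ m, ‖x m - xbar‖ ^ 2)
    (hrbar : rbar = (M : ℝ)⁻¹ • ∑ m, R' (x m))
    (hRbar : Rbar = (M : ℝ)⁻¹ * ∑ m, R (x m)) :
    -2 * ⟪xbar - xstar, rbar⟫
      ≤ -(Rbar - R xstar) + 2 * LR * V - μR * ‖xstar - xbar‖ ^ 2
        - ⟪R' xstar, xbar - xstar⟫ := by
  have hM' : (0 : ℝ) < M := by exact_mod_cast hM
  set w : Fin M → ℝ := fun _ ↦ (M : ℝ)⁻¹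
  have hw₀ : ∀ m ∈ univ, 0 ≤ w m := fun _ _ ↦ by positivity
  have hw : ∑ m, w m = 1 := by simp [w, hM'.ne']
  have hxbar' : xbar = ∑ m, w m • x m := by rw [hxbar, smul_sum]
  have hc : ∑ m, w m • (x m - xbar) = 0 := hxbar' ▸ sum_smul_sub_sum_smul_eq_zero hw
  have hV' : V = ∑ m, w m * ‖x m - xbar‖ ^ 2 := by rw [hV, mul_sum]
  have hrbar' : rbar = ∑ m, w m • R' (x m) := by rw [hrbar, smul_sum]
  have hRbar' : Rbar = ∑ m, w m * R (x m) := by rw [hRbar, mul_sum]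
  have hVnonneg : 0 ≤ V := hV' ▸ sum_nonneg fun m hm ↦ mul_nonneg (hw₀ m hm) (sq_nonneg _)
  have hinner := inner_sub_sum_smul_le_of_strongConvex_of_smooth hRconv hRsmooth hw₀ hw hc xstar
  have hRbar_le := sum_mul_le_of_smooth hRsmooth hw₀ hw hc
  have hgrad_star : ⟪R' xstar, xbar - xstar⟫ ≤ R xbar - R xstar := by
    linarith [hRconv xstar xbar, mul_nonneg (div_nonneg hμR zero_le_two) (sq_nonneg ‖xstar - xbar‖)]
  rw [← hrbar', ← hV'] at hinner
  rw [← hRbar', ← hV'] at hRbar_le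
  have hswap : ⟪xbar - xstar, rbar⟫ = -⟪xstar - xbar, rbar⟫ := by rw [← inner_neg_left, neg_sub]
  linarith [mul_nonneg hμR hVnonneg, mul_nonneg hLR.le hVnonneg]

/-- Lemma 4 (lem:inner_2): bound on `−2⟨x̄ − x*, r̄⟩` for a `μ_R`-strongly convex
and `L_R`-smooth function `R`, in terms of the average Bregman gap `R̄ − R(x*)`,
the dispersion `V` of the points, and the distance to `x*`. -/
theorem stmt_5 {E : Type*} [NormedAddCommGroup E] [InnerProductSpace ℝ E] [CompleteSpace E]
    (M : ℕ) (hM : 0 < M)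
    (R : E → ℝ) (R' : E → E) (μR LR : ℝ) (hμR : 0 ≤ μR) (hLR : 0 < LR)
    (hRdiff : ∀ z, HasGradientAt R (R' z) z)
    (hRconv : ∀ x y : E, μR / 2 * ‖x - y‖ ^ 2 ≤ R y - R x - ⟪R' x, y - x⟫)
    (hRsmooth : ∀ x y : E, R y - R x - ⟪R' x, y - x⟫ ≤ LR / 2 * ‖x - y‖ ^ 2)
    (x : Fin M → E) (xstar : E) (xbar rbar : E) (Rbar V : ℝ)
    (hxbar : xbar = (M : ℝ)⁻¹ • ∑ m, x m)
    (hV : V = (M : ℝ)⁻¹ * ∑ m, ‖x m - xbar‖ ^ 2)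
    (hrbar : rbar = (M : ℝ)⁻¹ • ∑ m, R' (x m))
    (hRbar : Rbar = (M : ℝ)⁻¹ * ∑ m, R (x m)) :
    -2 * ⟪xbar - xstar, rbar⟫
      ≤ -(Rbar - R xstar) + 2 * LR * V - μR * ‖xstar - xbar‖ ^ 2
        - ⟪R' xstar, xbar - xstar⟫ :=
  stmt_5_general M hM R R' μR LR hμR hLR hRconv hRsmooth x xstar xbar rbar Rbar V hxbar hV hrbar
    hRbar
end

section
/- Let L_Q, L_R > 0, set L = L_Q + L_R, and let 0 < γ ≤ 1/(6L). Define ζ = [−(L_Q − L_R − 1/(2γ)) + √((L_Q − L_R − 1/(2γ))² + 4L_Q L_R)] / (2L_Q). Then: (i) ζ > 0; (ii) γL_R(1 + 1/ζ) + 1/2 = γL_Q(1 + ζ); and (iii) γL_Q(1 + ζ) ≤ 11/12. -/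
set_option maxHeartbeats 1000000 in
/-- The key real-number computation inside the descent lemma (Lemma 5): for
`L = L_Q + L_R` and `0 < γ ≤ 1/(6L)`, the positive root `ζ` of
`L_Q ζ² + (L_Q − L_R − 1/(2γ))ζ − L_R = 0` satisfies `ζ > 0`,
`γL_R(1 + 1/ζ) + 1/2 = γL_Q(1 + ζ)` and `γL_Q(1 + ζ) ≤ 11/12`. -/
theorem stmt_6 (LQ LR L γ : ℝ) (hLQ : 0 < LQ) (hLR : 0 < LR) (hL : L = LQ + LR)
    (hγpos : 0 < γ) (hγ : γ ≤ 1 / (6 * L))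
    (ζ : ℝ)
    (hζdef : ζ = (-(LQ - LR - 1 / (2 * γ)) +
      Real.sqrt ((LQ - LR - 1 / (2 * γ)) ^ 2 + 4 * LQ * LR)) / (2 * LQ)) :
    0 < ζ ∧ γ * LR * (1 + 1 / ζ) + 1 / 2 = γ * LQ * (1 + ζ) ∧
      γ * LQ * (1 + ζ) ≤ 11 / 12 := by
  have hLpos : 0 < L := by rw [hL]; linarith
  have hγ6 : γ * (6 * L) ≤ 1 := (le_div_iff₀ (by positivity)).mp hγ
  obtain ⟨b, hb⟩ : ∃ b : ℝ, b = LQ - LR - 1 / (2 * γ) := ⟨_, rfl⟩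
  rw [← hb] at hζdef
  have h2γb : 2 * γ * b = 2 * γ * (LQ - LR) - 1 := by
    rw [hb]; field_simp
  have h3L : 3 * L ≤ 1 / (2 * γ) := by
    rw [le_div_iff₀ (by positivity)]; nlinarith
  have hnb : 2 * L ≤ -b := by
    have hbeq : -b = 1 / (2 * γ) - LQ + LR := by rw [hb]; ring
    have h3L' := h3L
    rw [hL] at h3L'
    rw [hbeq, hL]; linarith
  have hnbpos : 0 < -b := by nlinarith
  have hDpos : (0:ℝ) < b ^ 2 + 4 * LQ * LR := by nlinarith [sq_nonneg b]
  obtain ⟨s, hsdef⟩ : ∃ s : ℝ, s = Real.sqrt (b ^ 2 + 4 * LQ * LR) := ⟨_, rfl⟩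
  rw [← hsdef] at hζdef
  have hs2 : s ^ 2 = b ^ 2 + 4 * LQ * LR := by rw [hsdef]; exact Real.sq_sqrt hDpos.le
  have hsnn : 0 ≤ s := hsdef ▸ Real.sqrt_nonneg _
  have hζpos : 0 < ζ := by
    rw [hζdef]; exact div_pos (by linarith) (by linarith)
  have hζ2 : 2 * LQ * ζ = -b + s := by
    rw [hζdef]; field_simp
  -- root equation (polynomial form)
  have h4 : 4 * LQ * (LQ * ζ ^ 2 + b * ζ - LR) = 0 := by
    linear_combination hs2 + (2 * LQ * ζ + b + s) * hζ2
  have hq : LQ * ζ ^ 2 + b * ζ - LR = 0 :=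
    (mul_eq_zero.mp h4).resolve_left (by positivity)
  refine ⟨hζpos, ?_, ?_⟩
  · have hζne : ζ ≠ 0 := ne_of_gt hζpos
    field_simp
    linear_combination (-2 * γ) * hq + ζ * h2γb
  · -- sqrt upper bound
    have hc : s ≤ -b + 2 * LQ * LR / (-b) := by
      rw [hsdef, show -b + 2 * LQ * LR / (-b)
          = Real.sqrt ((-b + 2 * LQ * LR / (-b)) ^ 2) from (Real.sqrt_sq (by positivity)).symm]
      apply Real.sqrt_le_sqrt
      nlinarith [sq_nonneg (2 * LQ * LR / (-b)), hnbpos,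
        mul_div_cancel₀ (2 * LQ * LR) (ne_of_gt hnbpos)]
    have hms : (-b) * s ≤ (-b) ^ 2 + 2 * LQ * LR := by
      have h := mul_le_mul_of_nonneg_left hc hnbpos.le
      have hbne : b ≠ 0 := by intro h0; rw [h0] at hnbpos; simp at hnbpos
      have : (-b) * (-b + 2 * LQ * LR / (-b)) = (-b) ^ 2 + 2 * LQ * LR := by
        field_simp
        ring
      linarith [h.trans_eq this]
    have hγm : 2 * γ * (-b) = 1 - 2 * γ * LQ + 2 * γ * LR := by linarith [h2γb]
    have heq : 12 * γ * (-b) ^ 2 = 6 * (-b) * (1 - 2 * γ * LQ + 2 * γ * LR) := by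
      linear_combination (6 * (-b)) * hγm
    have h1 : 12 * γ * LR * (-b) ≤ 2 * (-b) := by
      nlinarith [mul_le_mul_of_nonneg_right hγ6 hnbpos.le,
        mul_nonneg (mul_nonneg hγpos.le hnbpos.le) hLQ.le]
    have h2 : 12 * γ * (LQ * LR) ≤ 3 * γ * L ^ 2 := by
      nlinarith [mul_nonneg hγpos.le (sq_nonneg (LQ - LR))]
    have h3 : 3 * γ * L ^ 2 ≤ L / 2 := by
      have := mul_le_mul_of_nonneg_right hγ6 hLpos.le
      nlinarith [this]
    have hfinal : 12 * γ * LQ * (-b) + 12 * γ * (-b) ^ 2 + 12 * γ * (LQ * LR) ≤ 11 * (-b) := by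
      linarith [heq, h1, h2, h3, hnb, hnbpos]
    have heq2 : 12 * (-b) * (γ * LQ * (1 + ζ))
        = 12 * γ * LQ * (-b) + 6 * γ * (-b) * ((-b) + s) := by
      linear_combination (6 * γ * (-b)) * hζ2
    have h6 : 6 * γ * ((-b) * s) ≤ 6 * γ * ((-b) ^ 2 + 2 * LQ * LR) :=
      mul_le_mul_of_nonneg_left hms (by positivity)
    have hgoal : 12 * (-b) * (γ * LQ * (1 + ζ)) ≤ 12 * (-b) * (11 / 12) := by
      linarith [heq2, h6, hfinal]
    exact le_of_mul_le_mul_left hgoal (by linarith)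
end

section
/- Let E be a real inner product space. Let Q : E → ℝ be differentiable, μ_Q-strongly convex and L_Q-smooth, and let R : E → ℝ be differentiable, μ_R-strongly convex and L_R-smooth, with μ_Q, μ_R ≥ 0 and L_Q, L_R > 0; set F = Q + R, μ = μ_Q + μ_R and L = L_Q + L_R. Let x¹, …, x^M ∈ E with average x̄ = (1/M)Σ_m x^m, V = (1/M)Σ_m ‖x^m − x̄‖², ḡ = (1/M)Σ_m (∇Q(x^m) + ∇R(x^m)). Assume ∇Q(x̄) = (1/M)Σ_m ∇Q(x^m) (gradient of Q commutes with averaging, as holds for quadratic Q), and let x* ∈ E satisfy ∇Q(x*) + ∇R(x*) = 0. Then for every γ with 0 < γ ≤ 1/(6L): ‖x̄ − x* − γḡ‖² ≤ (1 − γμ)‖x̄ − x*‖² − (γ/6)(F(x̄) − F(x*)) + 2γL_R·V. -/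
open RealInnerProductSpace

section aux
variable {E : Type*} [NormedAddCommGroup E] [InnerProductSpace ℝ E]

lemma aux_breg (f : E → ℝ) (f' : E → E) (L : ℝ) (hL : 0 < L)
    (hconv : ∀ x y : E, 0 ≤ f y - f x - ⟪f' x, y - x⟫)
    (hsmooth : ∀ x y : E, f y - f x - ⟪f' x, y - x⟫ ≤ L / 2 * ‖x - y‖ ^ 2)
    (x y : E) :
    ‖f' y - f' x‖ ^ 2 ≤ 2 * L * (f y - f x - ⟪f' x, y - x⟫) := by
  set g := f' y - f' x with hg
  set z := y - (1 / L) • g with hz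
  have h1 := hconv x z
  have h2 := hsmooth y z
  have e1 : ⟪f' x, z - x⟫ = ⟪f' x, y - x⟫ - (1 / L) * ⟪f' x, g⟫ := by
    rw [show z - x = (y - x) - (1 / L) • g by rw [hz]; abel,
      inner_sub_right, real_inner_smul_right]
  have e2 : ⟪f' y, z - y⟫ = -((1 / L) * ⟪f' y, g⟫) := by
    rw [show z - y = -((1 / L) • g) by rw [hz]; abel, inner_neg_right,
      real_inner_smul_right]
  have e3 : ‖y - z‖ ^ 2 = (1 / L) ^ 2 * ‖g‖ ^ 2 := by
    rw [show y - z = (1 / L) • g by rw [hz]; abel, norm_smul, Real.norm_eq_abs,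
      abs_of_pos (by positivity : (0:ℝ) < 1 / L), mul_pow]
  have e4 : (1 / L) * ⟪f' y, g⟫ - (1 / L) * ⟪f' x, g⟫ = (1 / L) * ‖g‖ ^ 2 := by
    rw [← mul_sub, ← inner_sub_left, ← hg, real_inner_self_eq_norm_sq]
  rw [e1] at h1
  rw [e2, e3] at h2
  have key : L / 2 * ((1 / L) ^ 2 * ‖g‖ ^ 2) = 1 / 2 * ((1 / L) * ‖g‖ ^ 2) := by
    field_simp
  have main : 1 / 2 * ((1 / L) * ‖g‖ ^ 2) ≤ f y - f x - ⟪f' x, y - x⟫ := by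
    linarith
  have hmul : 2 * L * (1 / 2 * ((1 / L) * ‖g‖ ^ 2)) = ‖g‖ ^ 2 := by
    field_simp
  nlinarith [mul_le_mul_of_nonneg_left main (by linarith : (0:ℝ) ≤ 2 * L)]

lemma aux_lip (f : E → ℝ) (f' : E → E) (L : ℝ) (hL : 0 < L)
    (hconv : ∀ x y : E, 0 ≤ f y - f x - ⟪f' x, y - x⟫)
    (hsmooth : ∀ x y : E, f y - f x - ⟪f' x, y - x⟫ ≤ L / 2 * ‖x - y‖ ^ 2)
    (x y : E) :
    ‖f' y - f' x‖ ^ 2 ≤ L ^ 2 * ‖x - y‖ ^ 2 := by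
  have h := aux_breg f f' L hL hconv hsmooth x y
  have h2 := hsmooth x y
  nlinarith [mul_le_mul_of_nonneg_left h2 (by linarith : (0:ℝ) ≤ 2 * L)]

lemma aux_var (M : ℕ) (hM : 0 < M) (v : Fin M → E) :
    ∑ m, ‖v m‖ ^ 2
      = M * ‖(M:ℝ)⁻¹ • ∑ m, v m‖ ^ 2 + ∑ m, ‖v m - (M:ℝ)⁻¹ • ∑ m, v m‖ ^ 2 := by
  have hMne : (M:ℝ) ≠ 0 := Nat.cast_ne_zero.mpr hM.ne'
  set s := ∑ m, v m with hs
  set a := (M:ℝ)⁻¹ • s with ha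
  have hsum : ∑ m, ‖v m - a‖ ^ 2
      = ∑ m, ‖v m‖ ^ 2 - 2 * ∑ m, ⟪v m, a⟫ + M * ‖a‖ ^ 2 := by
    have : ∀ m : Fin M, ‖v m - a‖ ^ 2 = ‖v m‖ ^ 2 - 2 * ⟪v m, a⟫ + ‖a‖ ^ 2 :=
      fun m => norm_sub_sq_real _ _
    rw [Finset.sum_congr rfl (fun m _ => this m), Finset.sum_add_distrib,
      Finset.sum_sub_distrib, ← Finset.mul_sum, Finset.sum_const,
      Finset.card_univ, Fintype.card_fin, nsmul_eq_mul]
  have hinner : ∑ m, ⟪v m, a⟫ = (M:ℝ)⁻¹ * ‖s‖ ^ 2 := by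
    rw [← sum_inner, ← hs, ha, real_inner_smul_right, real_inner_self_eq_norm_sq]
  have hnorm : ‖a‖ ^ 2 = ((M:ℝ)⁻¹) ^ 2 * ‖s‖ ^ 2 := by
    rw [ha, norm_smul, Real.norm_eq_abs, abs_of_nonneg (by positivity), mul_pow]
  rw [hsum, hinner, hnorm]
  field_simp
  ring

end aux
set_option maxHeartbeats 1000000 in
/-- Lemma 5 (deterministic descent lemma): for the ε-decomposition `F = Q + R`
with `Q` whose gradient commutes with averaging (as for quadratic `Q`), a
stationary point `x*` of `F` and a stepsize `0 < γ ≤ 1/(6L)`,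
`‖x̄ − x* − γḡ‖² ≤ (1 − γμ)‖x̄ − x*‖² − (γ/6)(F(x̄) − F(x*)) + 2γL_R V`. -/
theorem stmt_7 {E : Type*} [NormedAddCommGroup E] [InnerProductSpace ℝ E] [CompleteSpace E]
    (M : ℕ) (hM : 0 < M)
    (Q R : E → ℝ) (Q' R' : E → E) (μQ μR LQ LR : ℝ)
    (hμQ : 0 ≤ μQ) (hμR : 0 ≤ μR) (hLQ : 0 < LQ) (hLR : 0 < LR)
    (hQdiff : ∀ z, HasGradientAt Q (Q' z) z)
    (hRdiff : ∀ z, HasGradientAt R (R' z) z)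
    (hQconv : ∀ x y : E, μQ / 2 * ‖x - y‖ ^ 2 ≤ Q y - Q x - ⟪Q' x, y - x⟫)
    (hQsmooth : ∀ x y : E, Q y - Q x - ⟪Q' x, y - x⟫ ≤ LQ / 2 * ‖x - y‖ ^ 2)
    (hRconv : ∀ x y : E, μR / 2 * ‖x - y‖ ^ 2 ≤ R y - R x - ⟪R' x, y - x⟫)
    (hRsmooth : ∀ x y : E, R y - R x - ⟪R' x, y - x⟫ ≤ LR / 2 * ‖x - y‖ ^ 2)
    (F : E → ℝ) (hF : ∀ z, F z = Q z + R z)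
    (μ L : ℝ) (hμ : μ = μQ + μR) (hLsum : L = LQ + LR)
    (x : Fin M → E) (xstar : E) (xbar gbar : E) (V : ℝ)
    (hxbar : xbar = (M : ℝ)⁻¹ • ∑ m, x m)
    (hV : V = (M : ℝ)⁻¹ * ∑ m, ‖x m - xbar‖ ^ 2)
    (hgbar : gbar = (M : ℝ)⁻¹ • ∑ m, (Q' (x m) + R' (x m)))
    (hcomm : Q' xbar = (M : ℝ)⁻¹ • ∑ m, Q' (x m))
    (hopt : Q' xstar + R' xstar = 0)
    (γ : ℝ) (hγpos : 0 < γ) (hγ : γ ≤ 1 / (6 * L)) :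
    ‖xbar - xstar - γ • gbar‖ ^ 2
      ≤ (1 - γ * μ) * ‖xbar - xstar‖ ^ 2 - γ / 6 * (F xbar - F xstar)
        + 2 * γ * LR * V := by
  have hMne : (M:ℝ) ≠ 0 := Nat.cast_ne_zero.mpr hM.ne'
  have hMpos : (0:ℝ) < M := Nat.cast_pos.mpr hM
  have hL : 0 < L := by rw [hLsum]; linarith
  have hμ0 : 0 ≤ μ := by rw [hμ]; linarith
  have hγL : γ * L ≤ 1 / 6 := by
    have h6 : γ * (6 * L) ≤ 1 := (le_div_iff₀ (by positivity)).mp hγ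
    nlinarith
  have hLRL : LR ≤ L := by rw [hLsum]; linarith
  -- F-level convexity / smoothness
  have hFconv : ∀ a b : E, μ / 2 * ‖a - b‖ ^ 2
      ≤ F b - F a - ⟪Q' a + R' a, b - a⟫ := by
    intro a b
    rw [hF, hF, hμ, inner_add_left]
    linarith [hQconv a b, hRconv a b]
  have hFconv0 : ∀ a b : E, 0 ≤ F b - F a - ⟪Q' a + R' a, b - a⟫ := by
    intro a b
    have h := hFconv a b
    nlinarith [sq_nonneg ‖a - b‖, mul_nonneg hμ0 (sq_nonneg ‖a - b‖)]
  have hFsmooth : ∀ a b : E, F b - F a - ⟪Q' a + R' a, b - a⟫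
      ≤ L / 2 * ‖a - b‖ ^ 2 := by
    intro a b
    rw [hF, hF, hLsum, inner_add_left]
    linarith [hQsmooth a b, hRsmooth a b]
  have hRconv0 : ∀ a b : E, 0 ≤ R b - R a - ⟪R' a, b - a⟫ := by
    intro a b
    nlinarith [hRconv a b, mul_nonneg hμR (sq_nonneg ‖a - b‖)]
  have hΔ0 : 0 ≤ F xbar - F xstar := by
    have h := hFconv0 xstar xbar
    rw [hopt] at h
    simpa using h
  have hV0 : 0 ≤ V := by
    rw [hV]
    have : 0 ≤ ∑ m, ‖x m - xbar‖ ^ 2 :=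
      Finset.sum_nonneg fun m _ => sq_nonneg _
    positivity
  -- gbar decomposition
  set rb := (M:ℝ)⁻¹ • ∑ m, R' (x m) with hrb
  have hgbar2 : gbar = Q' xbar + rb := by
    rw [hgbar, Finset.sum_add_distrib, smul_add, ← hcomm, ← hrb]
  set e := rb - R' xbar with he
  -- ‖e‖² ≤ LR² V
  have hlipR := aux_lip R R' LR hLR hRconv0 hRsmooth
  have he_sum : (M:ℝ)⁻¹ • ∑ m, (R' (x m) - R' xbar) = e := by
    rw [Finset.sum_sub_distrib, Finset.sum_const, Finset.card_univ, Fintype.card_fin,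
      smul_sub, he, hrb]
    congr 1
    rw [← Nat.cast_smul_eq_nsmul ℝ M (R' xbar), smul_smul, inv_mul_cancel₀ hMne, one_smul]
  have hS2 : ∑ m, ‖x m - xbar‖ ^ 2 = (M:ℝ) * V := by
    rw [hV]; field_simp
  have he_bound : ‖e‖ ^ 2 ≤ LR ^ 2 * V := by
    have hvar := aux_var M hM (fun m => R' (x m) - R' xbar)
    rw [he_sum] at hvar
    have h1 : (M:ℝ) * ‖e‖ ^ 2 ≤ ∑ m, ‖R' (x m) - R' xbar‖ ^ 2 := by
      have hnn : 0 ≤ ∑ m, ‖(R' (x m) - R' xbar) - e‖ ^ 2 :=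
        Finset.sum_nonneg fun m _ => sq_nonneg _
      linarith [hvar]
    have h2 : ∑ m, ‖R' (x m) - R' xbar‖ ^ 2 ≤ LR ^ 2 * ((M:ℝ) * V) := by
      rw [← hS2, Finset.mul_sum]
      refine Finset.sum_le_sum fun m _ => ?_
      have h := hlipR xbar (x m)
      rwa [norm_sub_rev xbar (x m)] at h
    have h3 : (M:ℝ) * ‖e‖ ^ 2 ≤ (M:ℝ) * (LR ^ 2 * V) := by
      calc (M:ℝ) * ‖e‖ ^ 2 ≤ LR ^ 2 * ((M:ℝ) * V) := le_trans h1 h2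
        _ = (M:ℝ) * (LR ^ 2 * V) := by ring
    exact le_of_mul_le_mul_left h3 hMpos
  -- variance identity for x m - xstar
  have hS1 : ∑ m, ‖x m - xstar‖ ^ 2 = (M:ℝ) * (‖xbar - xstar‖ ^ 2 + V) := by
    have hvar := aux_var M hM (fun m => x m - xstar)
    have hav : (M:ℝ)⁻¹ • ∑ m, (x m - xstar) = xbar - xstar := by
      rw [Finset.sum_sub_distrib, Finset.sum_const, Finset.card_univ, Fintype.card_fin,
        smul_sub, hxbar]
      congr 1
      rw [← Nat.cast_smul_eq_nsmul ℝ M xstar, smul_smul, inv_mul_cancel₀ hMne, one_smul]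
    rw [hav] at hvar
    simp only [sub_sub_sub_cancel_right] at hvar
    rw [hvar, hS2]
    ring
  -- (i): inner product lower bound
  have hi : (F xbar - F xstar) + μ / 2 * ‖xbar - xstar‖ ^ 2 - LR / 2 * V
      ≤ ⟪gbar, xbar - xstar⟫ := by
    have hQpart : Q xbar - Q xstar + μQ / 2 * ‖xbar - xstar‖ ^ 2
        ≤ ⟪Q' xbar, xbar - xstar⟫ := by
      have h := hQconv xbar xstar
      have hneg : ⟪Q' xbar, xstar - xbar⟫ = -⟪Q' xbar, xbar - xstar⟫ := by
        rw [show xstar - xbar = -(xbar - xstar) by abel, inner_neg_right]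
      rw [hneg] at h
      linarith
    have hRm : ∀ m : Fin M,
        R xbar - R xstar + μR / 2 * ‖x m - xstar‖ ^ 2 - LR / 2 * ‖x m - xbar‖ ^ 2
          ≤ ⟪R' (x m), xbar - xstar⟫ := by
      intro m
      have h1 := hRconv (x m) xstar
      have h2 := hRsmooth (x m) xbar
      have hsplit : ⟪R' (x m), xbar - xstar⟫
          = ⟪R' (x m), xbar - x m⟫ - ⟪R' (x m), xstar - x m⟫ := by
        rw [← inner_sub_right]
        congr 1
        abel
      rw [hsplit]
      linarith
    have hsumR : (M:ℝ) * (R xbar - R xstar) + μR / 2 * ((M:ℝ) * (‖xbar - xstar‖ ^ 2 + V))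
        - LR / 2 * ((M:ℝ) * V) ≤ ⟪∑ m, R' (x m), xbar - xstar⟫ := by
      rw [sum_inner, ← hS1, ← hS2]
      calc (M:ℝ) * (R xbar - R xstar) + μR / 2 * ∑ m, ‖x m - xstar‖ ^ 2
            - LR / 2 * ∑ m, ‖x m - xbar‖ ^ 2
          = ∑ m : Fin M, (R xbar - R xstar + μR / 2 * ‖x m - xstar‖ ^ 2
              - LR / 2 * ‖x m - xbar‖ ^ 2) := by
            rw [Finset.sum_sub_distrib, Finset.sum_add_distrib, Finset.sum_const,
              Finset.card_univ, Fintype.card_fin, nsmul_eq_mul, ← Finset.mul_sum,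
              ← Finset.mul_sum]
        _ ≤ ∑ m, ⟪R' (x m), xbar - xstar⟫ := Finset.sum_le_sum fun m _ => hRm m
    have hrbinner : (R xbar - R xstar) + μR / 2 * (‖xbar - xstar‖ ^ 2 + V) - LR / 2 * V
        ≤ ⟪rb, xbar - xstar⟫ := by
      rw [hrb, real_inner_smul_left]
      have hmm := mul_le_mul_of_nonneg_left hsumR (le_of_lt (inv_pos.mpr hMpos))
      have heq : (M:ℝ)⁻¹ * ((M:ℝ) * (R xbar - R xstar)
            + μR / 2 * ((M:ℝ) * (‖xbar - xstar‖ ^ 2 + V)) - LR / 2 * ((M:ℝ) * V))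
          = (R xbar - R xstar) + μR / 2 * (‖xbar - xstar‖ ^ 2 + V) - LR / 2 * V := by
        field_simp
      rw [heq] at hmm
      exact hmm
    rw [hgbar2, inner_add_left, hF, hF, hμ]
    linarith [hQpart, hrbinner, mul_nonneg hμR hV0]
  -- (ii): norm of gbar bound
  have hgradF : ‖Q' xbar + R' xbar‖ ^ 2 ≤ 2 * L * (F xbar - F xstar) := by
    have h := aux_breg F (fun z => Q' z + R' z) L hL hFconv0 hFsmooth xstar xbar
    simp only [hopt, sub_zero, inner_zero_left] at h
    simpa using h
  have hii : ‖gbar‖ ^ 2 ≤ 4 * L * (F xbar - F xstar) + 2 * LR ^ 2 * V := by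
    have hsplit : gbar = (Q' xbar + R' xbar) + e := by
      rw [hgbar2, he]; abel
    have htri : ‖gbar‖ ^ 2 ≤ 2 * ‖Q' xbar + R' xbar‖ ^ 2 + 2 * ‖e‖ ^ 2 := by
      rw [hsplit]
      nlinarith [norm_add_sq_real (Q' xbar + R' xbar) e,
        real_inner_le_norm (Q' xbar + R' xbar) e,
        sq_nonneg (‖Q' xbar + R' xbar‖ - ‖e‖)]
    nlinarith [hgradF, he_bound]
  -- expansion of the left-hand side
  have hexp : ‖xbar - xstar - γ • gbar‖ ^ 2
      = ‖xbar - xstar‖ ^ 2 - 2 * γ * ⟪gbar, xbar - xstar⟫ + γ ^ 2 * ‖gbar‖ ^ 2 := by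
    rw [norm_sub_sq_real, real_inner_smul_right, norm_smul, Real.norm_eq_abs,
      mul_pow, sq_abs, real_inner_comm]
    ring
  rw [hexp]
  have m1 : 2 * γ * ((F xbar - F xstar) + μ / 2 * ‖xbar - xstar‖ ^ 2 - LR / 2 * V)
      ≤ 2 * γ * ⟪gbar, xbar - xstar⟫ :=
    mul_le_mul_of_nonneg_left hi (by linarith)
  have m2 : γ ^ 2 * ‖gbar‖ ^ 2
      ≤ γ ^ 2 * (4 * L * (F xbar - F xstar) + 2 * LR ^ 2 * V) :=
    mul_le_mul_of_nonneg_left hii (by positivity)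
  have h1 : 0 ≤ γ * (F xbar - F xstar) * (1 - 6 * (γ * L)) :=
    mul_nonneg (mul_nonneg hγpos.le hΔ0) (by linarith)
  have hγLR : γ * LR ≤ 1 / 6 := by
    have h := mul_le_mul_of_nonneg_left hLRL hγpos.le
    linarith
  have h2 : 0 ≤ γ * V * LR * (1 - 2 * (γ * LR)) :=
    mul_nonneg (mul_nonneg (mul_nonneg hγpos.le hV0) hLR.le) (by linarith)
  nlinarith [m1, m2, h1, h2]
end

section
/- Let (Ω, ℙ) be a probability space and let F : ℝ^d → ℝ be differentiable with L-Lipschitz gradient: ‖∇F(x) − ∇F(y)‖ ≤ L‖x − y‖ for all x, y. Let x* ∈ ℝ^d with ∇F(x*) = 0, let x¹, …, x^M ∈ ℝ^d with average x̄ = (1/M)Σ_m x^m and V = (1/M)Σ_m ‖x^m − x̄‖², and let G¹, …, G^M : Ω → ℝ^d be independent square-integrable random vectors with 𝔼[G^m] = ∇F(x^m) and 𝔼‖G^m − ∇F(x^m)‖² ≤ σ² + ρ‖∇F(x^m)‖² for each m, where σ, ρ ≥ 0. Then 𝔼‖(1/M)Σ_{m=1}^M G^m − (1/M)Σ_{m=1}^M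 ∇F(x^m)‖² ≤ σ²/M + (ρL²/M)·V + (ρL²/M)·‖x̄ − x*‖². -/
/-!
The centred gradients `G m - ∇F(x m)` are independent with mean zero, so their cross terms
vanish in expectation and the variance of their average is `1/M²` times the sum of the
individual variances. Each of these is bounded by the growth condition, and
`‖∇F(x m)‖ ≤ L ‖x m - x*‖` because `∇F(x*) = 0`. Finally the spread of the points around `x*`
splits as `∑ ‖x m - x*‖² = M V + M ‖x̄ - x*‖²`, since the deviations `x m - x̄` sum to zero.
-/
open MeasureTheory ProbabilityTheory Finset
open scoped RealInnerProductSpace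

theorem MeasureTheory.MemLp.integrable_inner {Ω E : Type*} [MeasurableSpace Ω] {μ : Measure Ω}
    [NormedAddCommGroup E] [InnerProductSpace ℝ E] {X Y : Ω → E}
    (hX : MemLp X 2 μ) (hY : MemLp Y 2 μ) :
    Integrable (fun ω ↦ ⟪X ω, Y ω⟫) μ :=
  memLp_one_iff_integrable.1 ((innerSL ℝ).memLp_of_bilin 1 hX hY)

theorem ProbabilityTheory.IndepFun.integral_inner {Ω E : Type*} [MeasurableSpace Ω]
    {μ : Measure Ω} [NormedAddCommGroup E] [InnerProductSpace ℝ E] [CompleteSpace E]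
    [MeasurableSpace E] [BorelSpace E] {X Y : Ω → E} (hXY : X ⟂ᵢ[μ] Y)
    (hX : Integrable X μ) (hY : Integrable Y μ) :
    ∫ ω, ⟪X ω, Y ω⟫ ∂μ = ⟪μ[X], μ[Y]⟫ :=
  hXY.integral_bilin hX hY (innerSL ℝ)

theorem integral_norm_sum_sq_of_pairwise_indepFun {Ω E ι : Type*} [MeasurableSpace Ω]
    {μ : Measure Ω} [IsFiniteMeasure μ] [NormedAddCommGroup E] [InnerProductSpace ℝ E]
    [CompleteSpace E] [MeasurableSpace E] [BorelSpace E] [Fintype ι] {Y : ι → Ω → E}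
    (hind : Pairwise fun i j ↦ Y i ⟂ᵢ[μ] Y j) (hY : ∀ i, MemLp (Y i) 2 μ)
    (hmean : ∀ i, μ[Y i] = 0) :
    ∫ ω, ‖∑ i, Y i ω‖ ^ 2 ∂μ = ∑ i, ∫ ω, ‖Y i ω‖ ^ 2 ∂μ := by
  have hint : ∀ i j, Integrable (fun ω ↦ ⟪Y i ω, Y j ω⟫) μ :=
    fun i j ↦ (hY i).integrable_inner (hY j)
  have hcross : ∀ i j, i ≠ j → ∫ ω, ⟪Y i ω, Y j ω⟫ ∂μ = 0 := fun i j hij ↦ by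
    rw [(hind hij).integral_inner ((hY i).integrable one_le_two)
      ((hY j).integrable one_le_two), hmean i, inner_zero_left]
  calc ∫ ω, ‖∑ i, Y i ω‖ ^ 2 ∂μ = ∫ ω, ∑ i, ∑ j, ⟪Y i ω, Y j ω⟫ ∂μ := by
        simp_rw [← real_inner_self_eq_norm_sq, sum_inner, inner_sum]
    _ = ∑ i, ∑ j, ∫ ω, ⟪Y i ω, Y j ω⟫ ∂μ := by
        rw [integral_finsetSum _ fun i _ ↦ integrable_finsetSum _ fun j _ ↦ hint i j]
        exact sum_congr rfl fun i _ ↦ integral_finsetSum _ fun j _ ↦ hint i j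
    _ = ∑ i, ∫ ω, ‖Y i ω‖ ^ 2 ∂μ := by
        refine sum_congr rfl fun i _ ↦ ?_
        rw [sum_eq_single i (fun j _ hji ↦ hcross i j hji.symm) (by simp)]
        simp_rw [real_inner_self_eq_norm_sq]

theorem sum_sub_mean_eq_zero {ι F : Type*} [Fintype ι] [Nonempty ι] [AddCommGroup F]
    [Module ℝ F] (x : ι → F) :
    ∑ i, (x i - (Fintype.card ι : ℝ)⁻¹ • ∑ j, x j) = 0 := by
  rw [sum_sub_distrib, sum_const, card_univ, ← Nat.cast_smul_eq_nsmul ℝ, smul_smul,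
    mul_inv_cancel₀ (by simp), one_smul, sub_self]

theorem sum_norm_sub_sq_eq_of_sum_sub_eq_zero {ι F : Type*} [Fintype ι] [NormedAddCommGroup F]
    [InnerProductSpace ℝ F] (x : ι → F) {c : F} (hc : ∑ i, (x i - c) = 0) (a : F) :
    ∑ i, ‖x i - a‖ ^ 2 = ∑ i, ‖x i - c‖ ^ 2 + Fintype.card ι * ‖c - a‖ ^ 2 := by
  calc ∑ i, ‖x i - a‖ ^ 2
      = ∑ i, (‖x i - c‖ ^ 2 + 2 * ⟪x i - c, c - a⟫ + ‖c - a‖ ^ 2) := by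
        simp_rw [← norm_add_sq_real, sub_add_sub_cancel]
    _ = ∑ i, ‖x i - c‖ ^ 2 + Fintype.card ι * ‖c - a‖ ^ 2 := by
        rw [sum_add_distrib, sum_add_distrib, ← mul_sum, ← sum_inner, hc, inner_zero_left,
          mul_zero, add_zero, sum_const, card_univ, nsmul_eq_mul]

theorem stmt_9_general {Ω : Type*} [MeasurableSpace Ω] (P : Measure Ω) [IsProbabilityMeasure P]
    (d : ℕ) (F' : EuclideanSpace ℝ (Fin d) → EuclideanSpace ℝ (Fin d))
    (L : ℝ)
    (hLip : ∀ x y, ‖F' x - F' y‖ ≤ L * ‖x - y‖)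
    (xstar : EuclideanSpace ℝ (Fin d)) (hopt : F' xstar = 0)
    (M : ℕ) (hM : 0 < M) (x : Fin M → EuclideanSpace ℝ (Fin d))
    (xbar : EuclideanSpace ℝ (Fin d)) (V : ℝ)
    (hxbar : xbar = (M : ℝ)⁻¹ • ∑ m, x m)
    (hV : V = (M : ℝ)⁻¹ * ∑ m, ‖x m - xbar‖ ^ 2)
    (G : Fin M → Ω → EuclideanSpace ℝ (Fin d))
    (hind : iIndepFun G P)
    (hL2 : ∀ m, MemLp (G m) 2 P)
    (hmean : ∀ m, ∫ ω, G m ω ∂P = F' (x m))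
    (σ ρ : ℝ) (hρ : 0 ≤ ρ)
    (hvar : ∀ m, ∫ ω, ‖G m ω - F' (x m)‖ ^ 2 ∂P ≤ σ ^ 2 + ρ * ‖F' (x m)‖ ^ 2) :
    ∫ ω, ‖(M : ℝ)⁻¹ • ∑ m, G m ω - (M : ℝ)⁻¹ • ∑ m, F' (x m)‖ ^ 2 ∂P
      ≤ σ ^ 2 / M + ρ * L ^ 2 / M * V + ρ * L ^ 2 / M * ‖xbar - xstar‖ ^ 2 := by
  have : NeZero M := ⟨hM.ne'⟩
  have hnoise : ∫ ω, ‖∑ m, (G m ω - F' (x m))‖ ^ 2 ∂P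
      = ∑ m, ∫ ω, ‖G m ω - F' (x m)‖ ^ 2 ∂P :=
    integral_norm_sum_sq_of_pairwise_indepFun
      (fun m k hmk ↦ (hind.indepFun hmk).comp (measurable_sub_const _) (measurable_sub_const _))
      (fun m ↦ (hL2 m).sub (memLp_const _))
      (fun m ↦ by rw [integral_sub ((hL2 m).integrable one_le_two) (integrable_const _), hmean,
        integral_const, probReal_univ, one_smul, sub_self])
  have hgrad : ∀ m, ‖F' (x m)‖ ^ 2 ≤ L ^ 2 * ‖x m - xstar‖ ^ 2 := fun m ↦ by
    have h := hLip (x m) xstar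
    rw [hopt, sub_zero] at h
    nlinarith [norm_nonneg (F' (x m))]
  have hspread : ∑ m, ‖x m - xstar‖ ^ 2 = M * V + M * ‖xbar - xstar‖ ^ 2 := by
    have hsum := sum_sub_mean_eq_zero x
    rw [Fintype.card_fin, ← hxbar] at hsum
    rw [sum_norm_sub_sq_eq_of_sum_sub_eq_zero x hsum, Fintype.card_fin, hV,
      mul_inv_cancel_left₀ (by positivity)]
  calc ∫ ω, ‖(M : ℝ)⁻¹ • ∑ m, G m ω - (M : ℝ)⁻¹ • ∑ m, F' (x m)‖ ^ 2 ∂P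
      = (M : ℝ)⁻¹ ^ 2 * ∑ m, ∫ ω, ‖G m ω - F' (x m)‖ ^ 2 ∂P := by
        simp_rw [← smul_sub, ← sum_sub_distrib, norm_smul, mul_pow, norm_inv, Real.norm_natCast]
        rw [integral_const_mul, hnoise]
    _ ≤ (M : ℝ)⁻¹ ^ 2 * ∑ m, (σ ^ 2 + ρ * (L ^ 2 * ‖x m - xstar‖ ^ 2)) := by
        gcongr with m
        exact (hvar m).trans (by gcongr; exact hgrad m)
    _ = σ ^ 2 / M + ρ * L ^ 2 / M * V + ρ * L ^ 2 / M * ‖xbar - xstar‖ ^ 2 := by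
        rw [sum_add_distrib, ← mul_sum, ← mul_sum, hspread]
        simp only [sum_const, card_univ, Fintype.card_fin, nsmul_eq_mul]
        field_simp
        ring

/-- Lemma 6: under the strong growth condition on the stochastic gradient oracle,
the variance of the averaged stochastic gradient of `M` independent workers is
bounded by `σ²/M + (ρL²/M)V + (ρL²/M)‖x̄ − x*‖²`. -/
theorem stmt_9 {Ω : Type*} [MeasurableSpace Ω] (P : Measure Ω) [IsProbabilityMeasure P]
    (d : ℕ) (F : EuclideanSpace ℝ (Fin d) → ℝ) (F' : EuclideanSpace ℝ (Fin d) → EuclideanSpace ℝ (Fin d))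
    (L : ℝ)
    (hFdiff : ∀ z, HasGradientAt F (F' z) z)
    (hLip : ∀ x y, ‖F' x - F' y‖ ≤ L * ‖x - y‖)
    (xstar : EuclideanSpace ℝ (Fin d)) (hopt : F' xstar = 0)
    (M : ℕ) (hM : 0 < M) (x : Fin M → EuclideanSpace ℝ (Fin d))
    (xbar : EuclideanSpace ℝ (Fin d)) (V : ℝ)
    (hxbar : xbar = (M : ℝ)⁻¹ • ∑ m, x m)
    (hV : V = (M : ℝ)⁻¹ * ∑ m, ‖x m - xbar‖ ^ 2)
    (G : Fin M → Ω → EuclideanSpace ℝ (Fin d))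
    (hind : iIndepFun G P)
    (hL2 : ∀ m, MemLp (G m) 2 P)
    (hmean : ∀ m, ∫ ω, G m ω ∂P = F' (x m))
    (σ ρ : ℝ) (hσ : 0 ≤ σ) (hρ : 0 ≤ ρ)
    (hvar : ∀ m, ∫ ω, ‖G m ω - F' (x m)‖ ^ 2 ∂P ≤ σ ^ 2 + ρ * ‖F' (x m)‖ ^ 2) :
    ∫ ω, ‖(M : ℝ)⁻¹ • ∑ m, G m ω - (M : ℝ)⁻¹ • ∑ m, F' (x m)‖ ^ 2 ∂P
      ≤ σ ^ 2 / M + ρ * L ^ 2 / M * V + ρ * L ^ 2 / M * ‖xbar - xstar‖ ^ 2 :=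
  stmt_9_general P d F' L hLip xstar hopt M hM x xbar V hxbar hV G hind hL2 hmean σ ρ hρ hvar
end

section
/- Let E be a real inner product space and let F : E → ℝ be differentiable, convex and L-smooth with L > 0. Let x¹, …, x^M ∈ E with average x̄ = (1/M)Σ_m x^m. Then (1/M)Σ_{m=1}^M ‖∇F(x^m) − ∇F(x̄)‖² ≤ (2L/M)Σ_{m=1}^M ⟨x^m − x̄, ∇F(x^m)⟩. -/
open RealInnerProductSpace

/-- Inequality (2004_1) in the proof of Lemma 7(d): for a convex `L`-smooth `F`,
`(1/M)Σ ‖∇F(x^m) − ∇F(x̄)‖² ≤ (2L/M)Σ ⟨x^m − x̄, ∇F(x^m)⟩`. -/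
theorem stmt_12 {E : Type*} [NormedAddCommGroup E] [InnerProductSpace ℝ E] [CompleteSpace E]
    (F : E → ℝ) (F' : E → E) (L : ℝ) (hL : 0 < L)
    (hFdiff : ∀ z, HasGradientAt F (F' z) z)
    (hconv : ∀ x y : E, 0 ≤ F y - F x - ⟪F' x, y - x⟫)
    (hsmooth : ∀ x y : E, F y - F x - ⟪F' x, y - x⟫ ≤ L / 2 * ‖x - y‖ ^ 2)
    (M : ℕ) (hM : 0 < M) (x : Fin M → E) (xbar : E)
    (hxbar : xbar = (M : ℝ)⁻¹ • ∑ m, x m) :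
    (M : ℝ)⁻¹ * ∑ m, ‖F' (x m) - F' xbar‖ ^ 2
      ≤ 2 * L / M * ∑ m, ⟪x m - xbar, F' (x m)⟫ := by
  have hLne : (L:ℝ) ≠ 0 := ne_of_gt hL
  -- Lower bound: F u + ⟪F' u, v - u⟫ + (2L)⁻¹ ‖F' v - F' u‖² ≤ F v
  have lower : ∀ u v : E, F u + ⟪F' u, v - u⟫ + (2*L)⁻¹ * ‖F' v - F' u‖^2 ≤ F v := by
    intro u v
    set g := F' v - F' u with hg
    set z := v - L⁻¹ • g with hz
    have h1 := hconv u z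
    have h2 := hsmooth v z
    have e1 : ⟪F' u, z - u⟫ = ⟪F' u, v - u⟫ - L⁻¹ * ⟪F' u, g⟫ := by
      rw [show z - u = (v - u) - L⁻¹ • g by rw [hz]; abel]
      rw [inner_sub_right, real_inner_smul_right]
    have e2 : ⟪F' v, z - v⟫ = - (L⁻¹ * ⟪F' v, g⟫) := by
      rw [show z - v = -(L⁻¹ • g) by rw [hz]; abel]
      rw [inner_neg_right, real_inner_smul_right]
    have e3 : ‖v - z‖^2 = L⁻¹^2 * ‖g‖^2 := by
      rw [show v - z = L⁻¹ • g by rw [hz]; abel]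
      rw [norm_smul, mul_pow]
      congr 1
      rw [Real.norm_eq_abs, abs_of_nonneg (inv_nonneg.mpr hL.le)]
    have e4 : ⟪F' v, g⟫ - ⟪F' u, g⟫ = ‖g‖^2 := by
      rw [← inner_sub_left, ← hg, real_inner_self_eq_norm_sq]
    rw [e1] at h1
    rw [e2, e3] at h2
    have e5 : (2*L)⁻¹ * ‖g‖^2 = L⁻¹ * ‖g‖^2 - L/2 * (L⁻¹^2 * ‖g‖^2) := by
      field_simp; ring
    have e4' : L⁻¹ * ⟪F' v, g⟫ - L⁻¹ * ⟪F' u, g⟫ = L⁻¹ * ‖g‖^2 := by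
      rw [← mul_sub, e4]
    linarith [h1, h2, e4', e5]
  -- Cocoercivity
  have key : ∀ u v : E, ‖F' u - F' v‖^2 ≤ L * ⟪u - v, F' u - F' v⟫ := by
    intro u v
    have a := lower u v
    have b := lower v u
    have hn : ‖F' v - F' u‖ = ‖F' u - F' v‖ := norm_sub_rev _ _
    have hi : ⟪F' u, v - u⟫ + ⟪F' v, u - v⟫ = -⟪u - v, F' u - F' v⟫ := by
      rw [real_inner_comm (u - v)]
      simp only [inner_sub_left, inner_sub_right]
      rw [real_inner_comm (F' u) u, real_inner_comm (F' u) v]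
      ring
    rw [hn] at a
    have htwo : (2:ℝ) * (2*L)⁻¹ = L⁻¹ := by field_simp
    have c : L⁻¹ * ‖F' u - F' v‖^2 ≤ ⟪u - v, F' u - F' v⟫ := by nlinarith [a, b, hi]
    calc ‖F' u - F' v‖^2 = L * (L⁻¹ * ‖F' u - F' v‖^2) := by field_simp
      _ ≤ L * ⟪u - v, F' u - F' v⟫ := mul_le_mul_of_nonneg_left c hL.le
  have hMpos : (0:ℝ) < (M:ℝ) := Nat.cast_pos.mpr hM
  have hMne : (M:ℝ) ≠ 0 := ne_of_gt hMpos
  have hsumx : ∑ m, (x m - xbar) = 0 := by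
    rw [Finset.sum_sub_distrib, Finset.sum_const, Finset.card_univ, Fintype.card_fin, hxbar,
      ← Nat.cast_smul_eq_nsmul ℝ M, smul_smul, mul_inv_cancel₀ hMne, one_smul, sub_self]
  have hsum0 : ∑ m, ⟪x m - xbar, F' xbar⟫ = 0 := by
    rw [← sum_inner, hsumx, inner_zero_left]
  set S := ∑ m, ⟪x m - xbar, F' (x m)⟫ with hS
  have hkeysum : ∑ m, ‖F' (x m) - F' xbar‖^2 ≤ L * S := by
    calc ∑ m, ‖F' (x m) - F' xbar‖^2
        ≤ ∑ m, L * ⟪x m - xbar, F' (x m) - F' xbar⟫ :=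
          Finset.sum_le_sum fun m _ => key (x m) xbar
      _ = L * ∑ m, ⟪x m - xbar, F' (x m) - F' xbar⟫ := (Finset.mul_sum _ _ _).symm
      _ = L * S := by
          congr 1
          simp only [inner_sub_right]
          rw [Finset.sum_sub_distrib, hsum0, sub_zero]
  have hnormnn : (0:ℝ) ≤ ∑ m, ‖F' (x m) - F' xbar‖^2 :=
    Finset.sum_nonneg fun m _ => sq_nonneg _
  have hS0 : 0 ≤ S := nonneg_of_mul_nonneg_right (le_trans hnormnn hkeysum) hL
  have h1 := mul_le_mul_of_nonneg_left hkeysum (inv_nonneg.mpr hMpos.le)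
  have h2 : 2 * L / M = 2 * L * (M:ℝ)⁻¹ := div_eq_mul_inv _ _
  rw [h2]
  nlinarith [h1, mul_nonneg (mul_nonneg hL.le hS0) (inv_nonneg.mpr hMpos.le)]
end

section
/- Let T ≥ 1 be a natural number, let γ, μ > 0 with γμ < 1, let C ≥ 0, and let a, e : ℕ → ℝ be sequences with a(t) ≥ 0 and e(t) ≥ 0 for all t, such that (γ/6)·e(t) ≤ (1 − γμ)·a(t) − a(t+1) + γC for all 0 ≤ t < T. Define weights w(t) = (1 − γμ)^{−(t+1)} and W = Σ_{t=0}^{T−1} w(t). Then (1/W)·Σ_{t=0}^{T−1} w(t)·e(t) ≤ (6/γ)·exp(−γμT)·a(0) + 6C. -/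
/-!
Multiplying the one-step inequality at time `t` by `w t = (1 - γμ)^{-(t+1)}` turns
`(1 - γμ) a t - a (t + 1)` into a difference of consecutive terms of `(1 - γμ)^{-t} a t`, so the
weighted sum telescopes to `(γ/6) Σ w t e t ≤ a 0 + γ C W`. Dividing by `W`, which is at least
its last term `(1 - γμ)^{-T} ≥ exp (γμT)`, gives the bound.
-/

open Finset Real

lemma sum_zpow_mul_le_of_le_mul_sub {q D : ℝ} (hq : 0 < q) {u a : ℕ → ℝ} {T : ℕ}
    (h : ∀ t < T, u t ≤ q * a t - a (t + 1) + D) :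
    ∑ t ∈ range T, q ^ (-(t + 1 : ℤ)) * u t
      ≤ a 0 - q ^ (-(T : ℤ)) * a T + D * ∑ t ∈ range T, q ^ (-(t + 1 : ℤ)) := by
  have hstep : ∀ t ∈ range T, q ^ (-(t + 1 : ℤ)) * u t
      ≤ (q ^ (-(t : ℤ)) * a t - q ^ (-((t + 1 : ℕ) : ℤ)) * a (t + 1))
        + D * q ^ (-(t + 1 : ℤ)) := by
    intro t ht
    have hshift : q ^ (-(t + 1 : ℤ)) * q = q ^ (-(t : ℤ)) := by
      rw [← zpow_add_one₀ hq.ne']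
      ring_nf
    calc q ^ (-(t + 1 : ℤ)) * u t ≤ q ^ (-(t + 1 : ℤ)) * (q * a t - a (t + 1) + D) :=
          mul_le_mul_of_nonneg_left (h t (mem_range.mp ht)) (zpow_pos hq _).le
      _ = _ := by rw [← hshift]; push_cast; ring
  calc _ ≤ _ := sum_le_sum hstep
    _ = _ := by
      rw [sum_add_distrib, sum_range_sub' (fun t => q ^ (-(t : ℤ)) * a t), mul_sum]
      simp

lemma inv_sum_zpow_neg_succ_le_pow {q : ℝ} (hq : 0 < q) {T : ℕ} (hT : 1 ≤ T) :
    (∑ t ∈ range T, q ^ (-(t + 1 : ℤ)))⁻¹ ≤ q ^ T := by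
  have hlast : q ^ (-(T : ℤ)) ≤ ∑ t ∈ range T, q ^ (-(t + 1 : ℤ)) := by
    have h := single_le_sum (f := fun t : ℕ => q ^ (-(t + 1 : ℤ)))
      (fun t _ => (zpow_pos hq _).le) (mem_range.mpr (Nat.sub_one_lt_of_le hT le_rfl))
    rwa [show ((T - 1 : ℕ) : ℤ) + 1 = T by omega] at h
  simpa [zpow_neg] using inv_anti₀ (zpow_pos hq _) hlast

theorem stmt_15_general (T : ℕ) (hT : 1 ≤ T) (γ μ C : ℝ)
    (hγ : 0 < γ) (hγμ : γ * μ < 1)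
    (a e : ℕ → ℝ) (ha : ∀ t, 0 ≤ a t)
    (hrec : ∀ t < T, γ / 6 * e t ≤ (1 - γ * μ) * a t - a (t + 1) + γ * C)
    (w : ℕ → ℝ) (hw : ∀ t, w t = (1 - γ * μ) ^ (-(t + 1 : ℤ)))
    (W : ℝ) (hW : W = ∑ t ∈ Finset.range T, w t) :
    1 / W * ∑ t ∈ Finset.range T, w t * e t
      ≤ 6 / γ * Real.exp (-(γ * μ * T)) * a 0 + 6 * C := by
  have hq : 0 < 1 - γ * μ := by linarith
  have hWpos : 0 < W := hW ▸ sum_pos (fun t _ => hw t ▸ zpow_pos hq _)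
    (nonempty_range_iff.mpr (by omega))
  have hS : ∑ t ∈ range T, w t * e t ≤ 6 / γ * a 0 + 6 * C * W := by
    have htel := sum_zpow_mul_le_of_le_mul_sub hq hrec
    have haT := mul_nonneg (zpow_pos hq (-(T : ℤ))).le (ha T)
    simp only [← hw, ← hW, mul_left_comm _ (γ / 6), ← mul_sum] at htel
    have hscale : γ / 6 * (6 / γ * a 0 + 6 * C * W) = a 0 + γ * C * W := by field_simp
    rw [← mul_le_mul_iff_right₀ (by positivity : 0 < γ / 6), hscale]
    linarith
  have hWinv : 1 / W ≤ exp (-(γ * μ * T)) :=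
    calc 1 / W ≤ (1 - γ * μ) ^ T := by
          simpa only [one_div, hW, hw] using inv_sum_zpow_neg_succ_le_pow hq hT
      _ ≤ exp (-(γ * μ)) ^ T := by gcongr; exact one_sub_le_exp_neg _
      _ = exp (-(γ * μ * T)) := by rw [← exp_nat_mul]; ring_nf
  calc 1 / W * ∑ t ∈ range T, w t * e t ≤ 1 / W * (6 / γ * a 0 + 6 * C * W) := by
          gcongr
    _ = 6 / γ * (1 / W) * a 0 + 6 * C := by field_simp
    _ ≤ 6 / γ * exp (-(γ * μ * T)) * a 0 + 6 * C := by gcongr; exact ha 0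

/-- Deterministic core of Theorem 1, case `T ≤ 2κ`: weighted telescoping of the
one-step inequality with weights `w(t) = (1 − γμ)^{−(t+1)}` yields
`(1/W) Σ w(t) e(t) ≤ (6/γ) exp(−γμT) a(0) + 6C`. -/
theorem stmt_15 (T : ℕ) (hT : 1 ≤ T) (γ μ C : ℝ)
    (hγ : 0 < γ) (hμ : 0 < μ) (hγμ : γ * μ < 1) (hC : 0 ≤ C)
    (a e : ℕ → ℝ) (ha : ∀ t, 0 ≤ a t) (he : ∀ t, 0 ≤ e t)
    (hrec : ∀ t < T, γ / 6 * e t ≤ (1 - γ * μ) * a t - a (t + 1) + γ * C)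
    (w : ℕ → ℝ) (hw : ∀ t, w t = (1 - γ * μ) ^ (-(t + 1 : ℤ)))
    (W : ℝ) (hW : W = ∑ t ∈ Finset.range T, w t) :
    1 / W * ∑ t ∈ Finset.range T, w t * e t
      ≤ 6 / γ * Real.exp (-(γ * μ * T)) * a 0 + 6 * C :=
  stmt_15_general T hT γ μ C hγ hγμ a e ha hrec w hw W hW
end

section
/- Let L, σ, L_R, r₀ > 0, let M, T, H be positive natural numbers, and set γ = min{ 1/(6L), r₀√M/(σ√T), (r₀²/(L_R σ² T H))^{1/3} }. Let a, e : ℕ → ℝ be sequences with a(t) ≥ 0 and e(t) ≥ 0 for all t, a(0) = r₀², such that (γ/6)·e(t) ≤ a(t) − a(t+1) + γ²σ²/M + 2L_R(H−1)γ³σ² for all 0 ≤ t < T. Then (1/T)·Σ_{t=0}^{T−1} e(t) ≤ 36L·r₀²/T + 12·σ·r₀/√(MT) + 18·(L_R σ² r₀⁴ H / T²)^{1/3}. -/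
/-!
Summing the one-step descent inequality telescopes the distances `a t`, so the average error is
at most `6 r₀² / (γ T) + 6 γ σ² / M + 12 L_R H γ² σ²`. Since `γ` is the minimum of three
candidate stepsizes, `1 / γ` is at most the sum of their reciprocals while `γ` is at most each of
them; every candidate balances the `1 / γ` term against one of the other terms, and each balanced
pair evaluates to one term of the rate.
-/

open Finset

lemma sum_le_of_telescoping {a e : ℕ → ℝ} {b : ℝ} {T : ℕ} (haT : 0 ≤ a T)
    (h : ∀ t < T, e t ≤ a t - a (t + 1) + b) :
    ∑ t ∈ range T, e t ≤ a 0 + T * b :=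
  calc ∑ t ∈ range T, e t ≤ ∑ t ∈ range T, (a t - a (t + 1) + b) :=
        sum_le_sum fun t ht => h t (mem_range.mp ht)
    _ = a 0 - a T + T * b := by
        rw [sum_add_distrib, sum_range_sub' a, sum_const, card_range, nsmul_eq_mul]
    _ ≤ a 0 + T * b := by linarith

lemma one_div_min_le_one_div_add {x y : ℝ} (hx : 0 < x) (hy : 0 < y) :
    1 / min x y ≤ 1 / x + 1 / y := by
  rcases min_cases x y with ⟨h, -⟩ | ⟨h, -⟩ <;> rw [h] <;>
    linarith [one_div_pos.mpr hx, one_div_pos.mpr hy]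

lemma div_add_mul_add_mul_sq_le_of_eq_min {γ γ₁ γ₂ γ₃ R B C : ℝ}
    (h₁ : 0 < γ₁) (h₂ : 0 < γ₂) (h₃ : 0 < γ₃) (hR : 0 ≤ R) (hB : 0 ≤ B) (hC : 0 ≤ C)
    (hγ : γ = min γ₁ (min γ₂ γ₃)) :
    R / γ + B * γ + C * γ ^ 2 ≤ R / γ₁ + (R / γ₂ + B * γ₂) + (R / γ₃ + C * γ₃ ^ 2) := by
  have hγpos : 0 < γ := hγ ▸ lt_min h₁ (lt_min h₂ h₃)
  have hinv : 1 / γ ≤ 1 / γ₁ + 1 / γ₂ + 1 / γ₃ := by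
    rw [hγ]
    linarith [one_div_min_le_one_div_add h₁ (lt_min h₂ h₃), one_div_min_le_one_div_add h₂ h₃]
  have hγ₂ : γ ≤ γ₂ := hγ ▸ (min_le_right _ _).trans (min_le_left _ _)
  have hγ₃ : γ ≤ γ₃ := hγ ▸ (min_le_right _ _).trans (min_le_right _ _)
  have hR' : R / γ ≤ R / γ₁ + R / γ₂ + R / γ₃ := by
    simpa only [mul_one_div, mul_add] using mul_le_mul_of_nonneg_left hinv hR
  have hB' : B * γ ≤ B * γ₂ := by gcongr
  have hC' : C * γ ^ 2 ≤ C * γ₃ ^ 2 := by gcongr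
  linarith

lemma average_le_of_descent {σ LR r0 γ : ℝ} {M T H : ℕ} {a e : ℕ → ℝ}
    (hLR : 0 ≤ LR) (hT : 0 < T) (hγ : 0 < γ) (ha : 0 ≤ a T) (ha0 : a 0 = r0 ^ 2)
    (hrec : ∀ t < T, γ / 6 * e t
      ≤ a t - a (t + 1) + γ ^ 2 * σ ^ 2 / M + 2 * LR * ((H : ℝ) - 1) * γ ^ 3 * σ ^ 2) :
    1 / T * ∑ t ∈ range T, e t
      ≤ 6 * r0 ^ 2 / T / γ + 6 * σ ^ 2 / M * γ + 12 * LR * H * σ ^ 2 * γ ^ 2 := by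
  have hTR : (0 : ℝ) < T := by exact_mod_cast hT
  have hsum := sum_le_of_telescoping (e := fun t => γ / 6 * e t) ha
    fun t ht => (hrec t ht).trans_eq (add_assoc _ _ _)
  rw [← mul_sum, ha0] at hsum
  have hdrift : 2 * LR * ((H : ℝ) - 1) * γ ^ 3 * σ ^ 2 ≤ 2 * LR * H * γ ^ 3 * σ ^ 2 := by
    nlinarith [show 0 ≤ LR * γ ^ 3 * σ ^ 2 by positivity]
  calc 1 / T * ∑ t ∈ range T, e t = 6 / (γ * T) * (γ / 6 * ∑ t ∈ range T, e t) := by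
        field_simp
    _ ≤ 6 / (γ * T) * (r0 ^ 2 + T * (γ ^ 2 * σ ^ 2 / M + 2 * LR * H * γ ^ 3 * σ ^ 2)) := by
        gcongr
        exact hsum.trans (by gcongr)
    _ = 6 * r0 ^ 2 / T / γ + 6 * σ ^ 2 / M * γ + 12 * LR * H * σ ^ 2 * γ ^ 2 := by
        field_simp
        ring

lemma eq_rpow_one_div_three_of_pow_three_eq {x y : ℝ} (hx : 0 ≤ x) (h : x ^ 3 = y) :
    x = y ^ ((1 : ℝ) / 3) := by
  rw [← h, ← Real.rpow_natCast, ← Real.rpow_mul hx]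
  norm_num

lemma noise_terms_at_stepsize {σ r0 M T : ℝ} (hσ : 0 < σ) (hr0 : 0 < r0) (hM : 0 < M)
    (hT : 0 < T) :
    6 * r0 ^ 2 / T / (r0 * Real.sqrt M / (σ * Real.sqrt T))
        + 6 * σ ^ 2 / M * (r0 * Real.sqrt M / (σ * Real.sqrt T))
      = 12 * σ * r0 / Real.sqrt (M * T) := by
  have hsM := Real.sq_sqrt hM.le
  have hsT := Real.sq_sqrt hT.le
  have hsM_pos : 0 < Real.sqrt M := Real.sqrt_pos.mpr hM
  have hsT_pos : 0 < Real.sqrt T := Real.sqrt_pos.mpr hT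
  rw [Real.sqrt_mul hM.le]
  field_simp
  rw [hsM, hsT]
  ring

lemma drift_terms_at_stepsize {LR σ r0 T H : ℝ} (hLR : 0 < LR) (hσ : 0 < σ) (hr0 : 0 < r0)
    (hT : 0 < T) (hH : 0 < H) :
    6 * r0 ^ 2 / T / (r0 ^ 2 / (LR * σ ^ 2 * T * H)) ^ ((1 : ℝ) / 3)
        + 12 * LR * H * σ ^ 2 * ((r0 ^ 2 / (LR * σ ^ 2 * T * H)) ^ ((1 : ℝ) / 3)) ^ 2
      = 18 * (LR * σ ^ 2 * r0 ^ 4 * H / T ^ 2) ^ ((1 : ℝ) / 3) := by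
  set g := (r0 ^ 2 / (LR * σ ^ 2 * T * H)) ^ ((1 : ℝ) / 3) with hg
  have hg3 : g ^ 3 = r0 ^ 2 / (LR * σ ^ 2 * T * H) := by
    rw [hg, ← Real.rpow_natCast, ← Real.rpow_mul (by positivity)]
    norm_num
  have hbias : r0 ^ 2 / T / g = (LR * σ ^ 2 * r0 ^ 4 * H / T ^ 2) ^ ((1 : ℝ) / 3) := by
    refine eq_rpow_one_div_three_of_pow_three_eq (by positivity) ?_
    rw [div_pow, hg3]
    field_simp
  have hdrift : LR * H * σ ^ 2 * g ^ 2 = (LR * σ ^ 2 * r0 ^ 4 * H / T ^ 2) ^ ((1 : ℝ) / 3) := by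
    refine eq_rpow_one_div_three_of_pow_three_eq (by positivity) ?_
    rw [show (LR * H * σ ^ 2 * g ^ 2) ^ 3 = LR ^ 3 * H ^ 3 * σ ^ 6 * (g ^ 3) ^ 2 by ring, hg3]
    field_simp
  linear_combination 6 * hbias + 12 * hdrift

theorem stmt_18_general (L σ LR r0 : ℝ) (hL : 0 < L) (hσ : 0 < σ) (hLR : 0 < LR) (hr0 : 0 < r0)
    (M T H : ℕ) (hM : 0 < M) (hT : 0 < T) (hH : 0 < H)
    (γ : ℝ)
    (hγ : γ = min (1 / (6 * L)) (min (r0 * Real.sqrt M / (σ * Real.sqrt T))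
      ((r0 ^ 2 / (LR * σ ^ 2 * T * H)) ^ ((1 : ℝ) / 3))))
    (a e : ℕ → ℝ) (ha : ∀ t, 0 ≤ a t) (ha0 : a 0 = r0 ^ 2)
    (hrec : ∀ t < T, γ / 6 * e t
      ≤ a t - a (t + 1) + γ ^ 2 * σ ^ 2 / M + 2 * LR * ((H : ℝ) - 1) * γ ^ 3 * σ ^ 2) :
    1 / T * ∑ t ∈ Finset.range T, e t
      ≤ 36 * L * r0 ^ 2 / T + 12 * σ * r0 / Real.sqrt (M * T)
        + 18 * (LR * σ ^ 2 * r0 ^ 4 * H / T ^ 2) ^ ((1 : ℝ) / 3) := by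
  have hMR : (0 : ℝ) < M := by exact_mod_cast hM
  have hTR : (0 : ℝ) < T := by exact_mod_cast hT
  have hHR : (0 : ℝ) < H := by exact_mod_cast hH
  have hγpos : 0 < γ := hγ ▸ lt_min (by positivity) (lt_min (by positivity) (by positivity))
  calc 1 / T * ∑ t ∈ range T, e t
      ≤ 6 * r0 ^ 2 / T / γ + 6 * σ ^ 2 / M * γ + 12 * LR * H * σ ^ 2 * γ ^ 2 :=
        average_le_of_descent hLR.le hT hγpos (ha T) ha0 hrec
    _ ≤ 6 * r0 ^ 2 / T / (1 / (6 * L))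
          + (6 * r0 ^ 2 / T / (r0 * Real.sqrt M / (σ * Real.sqrt T))
            + 6 * σ ^ 2 / M * (r0 * Real.sqrt M / (σ * Real.sqrt T)))
          + (6 * r0 ^ 2 / T / (r0 ^ 2 / (LR * σ ^ 2 * T * H)) ^ ((1 : ℝ) / 3)
            + 12 * LR * H * σ ^ 2 * ((r0 ^ 2 / (LR * σ ^ 2 * T * H)) ^ ((1 : ℝ) / 3)) ^ 2) :=
        div_add_mul_add_mul_sq_le_of_eq_min (by positivity) (by positivity) (by positivity)
          (by positivity) (by positivity) (by positivity) hγ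
    _ = 36 * L * r0 ^ 2 / T + 12 * σ * r0 / Real.sqrt (M * T)
          + 18 * (LR * σ ^ 2 * r0 ^ 4 * H / T ^ 2) ^ ((1 : ℝ) / 3) := by
        rw [noise_terms_at_stepsize hσ hr0 hMR hTR, drift_terms_at_stepsize hLR hσ hr0 hTR hHR]
        field_simp
        ring

/-- Deterministic core of Theorem 2 (convex case, bounded variance) with explicit
constants: with the stated stepsize choice, telescoping the one-step inequality
gives `(1/T)Σ e(t) ≤ 36L r₀²/T + 12 σr₀/√(MT) + 18 (L_R σ² r₀⁴ H/T²)^{1/3}`. -/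
theorem stmt_18 (L σ LR r0 : ℝ) (hL : 0 < L) (hσ : 0 < σ) (hLR : 0 < LR) (hr0 : 0 < r0)
    (M T H : ℕ) (hM : 0 < M) (hT : 0 < T) (hH : 0 < H)
    (γ : ℝ)
    (hγ : γ = min (1 / (6 * L)) (min (r0 * Real.sqrt M / (σ * Real.sqrt T))
      ((r0 ^ 2 / (LR * σ ^ 2 * T * H)) ^ ((1 : ℝ) / 3))))
    (a e : ℕ → ℝ) (ha : ∀ t, 0 ≤ a t) (he : ∀ t, 0 ≤ e t) (ha0 : a 0 = r0 ^ 2)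
    (hrec : ∀ t < T, γ / 6 * e t
      ≤ a t - a (t + 1) + γ ^ 2 * σ ^ 2 / M + 2 * LR * ((H : ℝ) - 1) * γ ^ 3 * σ ^ 2) :
    1 / T * ∑ t ∈ Finset.range T, e t
      ≤ 36 * L * r0 ^ 2 / T + 12 * σ * r0 / Real.sqrt (M * T)
        + 18 * (LR * σ ^ 2 * r0 ^ 4 * H / T ^ 2) ^ ((1 : ℝ) / 3) :=
  stmt_18_general L σ LR r0 hL hσ hLR hr0 M T H hM hT hH γ hγ a e ha ha0 hrec
end

section
/- Let L, μ, σ > 0 with μ ≤ L, let L_R ≥ 0, let M, H be positive natural numbers, let T ≥ 1 be a natural number with μT ≤ 2L, and set γ = 1/(6L). Let a, e : ℕ → ℝ be sequences with a(t) ≥ 0 and e(t) ≥ 0 for all t, such that (γ/6)·e(t) ≤ (1 − γμ)·a(t) − a(t+1) + γ²σ²/M + 2L_R(H−1)γ³σ² for all 0 ≤ t < T. Define weights w(t) = (1 − μ/(6L))^{−(t+1)} and W = Σ_{t=0}^{T−1} w(t). Then (1/W)·Σ_{t=0}^{T−1} w(t)·e(t) ≤ 36L·exp(−μT/(6L))·a(0)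 + 2σ²/(μTM) + 4L_R(H−1)σ²/(3μ²T²). -/
/-!
Multiplying the `t`-th recursion step by `w t = r^{-(t+1)}`, where `r = 1 - γμ = 1 - μ/(6L)`,
turns the contraction `(1 - γμ) a t - a (t+1)` into the telescoping difference
`r^{-t} a t - r^{-(t+1)} a (t+1)`, so `(γ/6) Σ w e ≤ a 0 + C W` with `C` the noise term.
Since `r^{-1} ≥ exp (μ/(6L))`, the last weight alone gives `W ≥ exp (μT/(6L))`; dividing by `W`
and using `μT ≤ 2L` to compare `1/L` with `2/(μT)` yields the bound.
-/

open Finset Real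

theorem mul_sum_inv_pow_mul_le_of_le_mul_sub {r c C : ℝ} (hr : 0 < r) {a e : ℕ → ℝ} {T : ℕ}
    (haT : 0 ≤ a T) (hrec : ∀ t < T, c * e t ≤ r * a t - a (t + 1) + C) :
    c * ∑ t ∈ range T, r⁻¹ ^ (t + 1) * e t ≤ a 0 + C * ∑ t ∈ range T, r⁻¹ ^ (t + 1) := by
  have hstep : ∀ t ∈ range T, c * (r⁻¹ ^ (t + 1) * e t)
      ≤ (r⁻¹ ^ t * a t - r⁻¹ ^ (t + 1) * a (t + 1)) + C * r⁻¹ ^ (t + 1) := by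
    intro t ht
    have h := mul_le_mul_of_nonneg_left (hrec t (mem_range.1 ht))
      (by positivity : 0 ≤ r⁻¹ ^ (t + 1))
    have hrr : r⁻¹ * r = 1 := inv_mul_cancel₀ hr.ne'
    linear_combination h + r⁻¹ ^ t * a t * hrr
  calc c * ∑ t ∈ range T, r⁻¹ ^ (t + 1) * e t
      ≤ ∑ t ∈ range T, ((r⁻¹ ^ t * a t - r⁻¹ ^ (t + 1) * a (t + 1)) + C * r⁻¹ ^ (t + 1)) := by
        rw [mul_sum]; exact sum_le_sum hstep
    _ = a 0 - r⁻¹ ^ T * a T + C * ∑ t ∈ range T, r⁻¹ ^ (t + 1) := by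
        rw [sum_add_distrib, sum_range_sub' (fun t ↦ r⁻¹ ^ t * a t), ← mul_sum, pow_zero, one_mul]
    _ ≤ a 0 + C * ∑ t ∈ range T, r⁻¹ ^ (t + 1) := by
        have : 0 ≤ r⁻¹ ^ T * a T := mul_nonneg (pow_nonneg (inv_nonneg.2 hr.le) T) haT
        linarith

theorem Real.exp_mul_le_sum_range_inv_one_sub_pow {x : ℝ} (hx₀ : 0 ≤ x) (hx₁ : x < 1) {T : ℕ}
    (hT : 1 ≤ T) : exp (x * T) ≤ ∑ t ∈ range T, (1 - x)⁻¹ ^ (t + 1) := by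
  have hpos : 0 ≤ (1 - x)⁻¹ := inv_nonneg.2 (by linarith)
  calc exp (x * T) = exp x ^ T := by rw [← exp_nat_mul, mul_comm]
    _ ≤ (1 - x)⁻¹ ^ T := by
        gcongr; simpa only [one_div] using exp_bound_div_one_sub_of_interval hx₀ hx₁
    _ = (1 - x)⁻¹ ^ (T - 1 + 1) := by rw [Nat.sub_add_cancel hT]
    _ ≤ ∑ t ∈ range T, (1 - x)⁻¹ ^ (t + 1) :=
        single_le_sum (fun t _ ↦ pow_nonneg hpos (t + 1)) (mem_range.2 (by omega))

theorem one_div_mul_le_of_mul_le_add_mul {c S A C W y : ℝ} (hc : 0 < c) (hA : 0 ≤ A)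
    (hW : exp y ≤ W) (h : c * S ≤ A + C * W) :
    1 / W * S ≤ c⁻¹ * exp (-y) * A + c⁻¹ * C := by
  have hW₀ : 0 < W := (exp_pos y).trans_le hW
  have hinv : 1 / W ≤ exp (-y) := by
    rw [exp_neg, ← one_div]; exact one_div_le_one_div_of_le (exp_pos y) hW
  calc 1 / W * S = c⁻¹ * (1 / W) * (c * S) := by field_simp
    _ ≤ c⁻¹ * (1 / W) * (A + C * W) := by gcongr
    _ = c⁻¹ * (1 / W) * A + c⁻¹ * C := by field_simp
    _ ≤ c⁻¹ * exp (-y) * A + c⁻¹ * C := by gcongr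

theorem noise_term_le {L μ σ LR H M T : ℝ} (hL : 0 < L) (hμ : 0 < μ) (hM : 0 < M) (hT : 0 < T)
    (hTκ : μ * T ≤ 2 * L) (hLRH : 0 ≤ LR * (H - 1)) :
    36 * L * ((1 / (6 * L)) ^ 2 * σ ^ 2 / M + 2 * LR * (H - 1) * (1 / (6 * L)) ^ 3 * σ ^ 2)
      ≤ 2 * σ ^ 2 / (μ * T * M) + 4 * LR * (H - 1) * σ ^ 2 / (3 * μ ^ 2 * T ^ 2) := by
  have hsq : (μ * T) ^ 2 ≤ (2 * L) ^ 2 := pow_le_pow_left₀ (by positivity) hTκ 2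
  have hvar : σ ^ 2 / (L * M) ≤ 2 * σ ^ 2 / (μ * T * M) := by
    rw [div_le_div_iff₀ (by positivity) (by positivity)]
    nlinarith [mul_le_mul_of_nonneg_left hTκ (by positivity : 0 ≤ σ ^ 2 * M)]
  have hdrift : LR * (H - 1) * σ ^ 2 / (3 * L ^ 2)
      ≤ 4 * LR * (H - 1) * σ ^ 2 / (3 * μ ^ 2 * T ^ 2) := by
    rw [div_le_div_iff₀ (by positivity) (by positivity)]
    nlinarith [mul_le_mul_of_nonneg_left hsq (by positivity : 0 ≤ LR * (H - 1) * σ ^ 2)]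
  calc 36 * L * ((1 / (6 * L)) ^ 2 * σ ^ 2 / M + 2 * LR * (H - 1) * (1 / (6 * L)) ^ 3 * σ ^ 2)
      = σ ^ 2 / (L * M) + LR * (H - 1) * σ ^ 2 / (3 * L ^ 2) := by field_simp; ring
    _ ≤ _ := add_le_add hvar hdrift

theorem stmt_19_general (L μ σ LR : ℝ) (hL : 0 < L) (hμ : 0 < μ)
    (hμL : μ ≤ L) (hLR : 0 ≤ LR)
    (M H : ℕ) (hM : 0 < M) (hH : 0 < H)
    (T : ℕ) (hT : 1 ≤ T) (hTκ : μ * T ≤ 2 * L)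
    (γ : ℝ) (hγ : γ = 1 / (6 * L))
    (a e : ℕ → ℝ) (ha : ∀ t, 0 ≤ a t)
    (hrec : ∀ t < T, γ / 6 * e t ≤ (1 - γ * μ) * a t - a (t + 1)
      + γ ^ 2 * σ ^ 2 / M + 2 * LR * ((H : ℝ) - 1) * γ ^ 3 * σ ^ 2)
    (w : ℕ → ℝ) (hw : ∀ t, w t = (1 - μ / (6 * L)) ^ (-(t + 1 : ℤ)))
    (W : ℝ) (hW : W = ∑ t ∈ Finset.range T, w t) :
    1 / W * ∑ t ∈ Finset.range T, w t * e t
      ≤ 36 * L * Real.exp (-(μ * T / (6 * L))) * a 0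
        + 2 * σ ^ 2 / (μ * T * M)
        + 4 * LR * ((H : ℝ) - 1) * σ ^ 2 / (3 * μ ^ 2 * T ^ 2) := by
  set C := γ ^ 2 * σ ^ 2 / M + 2 * LR * ((H : ℝ) - 1) * γ ^ 3 * σ ^ 2
  set r := 1 - μ / (6 * L) with hr
  have hr₀ : 0 < r := by rw [hr, sub_pos, div_lt_one (by positivity)]; linarith
  have hw' : ∀ t : ℕ, w t = r⁻¹ ^ (t + 1) := fun t ↦ by
    rw [hw, show -((t : ℤ) + 1) = -((t + 1 : ℕ) : ℤ) by push_cast; ring, zpow_neg, zpow_natCast,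
      inv_pow]
  simp only [hw'] at hW ⊢
  have hsum : γ / 6 * ∑ t ∈ range T, r⁻¹ ^ (t + 1) * e t ≤ a 0 + C * W := by
    have hγμ : 1 - γ * μ = r := by rw [hγ, hr]; ring
    rw [hW]
    exact mul_sum_inv_pow_mul_le_of_le_mul_sub hr₀ (ha T)
      fun t ht ↦ by linarith [hγμ ▸ hrec t ht]
  have hexp : exp (μ * T / (6 * L)) ≤ W := by
    rw [hW, mul_div_right_comm]
    exact exp_mul_le_sum_range_inv_one_sub_pow (by positivity) (by linarith) hT
  have hmain := one_div_mul_le_of_mul_le_add_mul (by rw [hγ]; positivity) (ha 0) hexp hsum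
  have hc : (γ / 6)⁻¹ = 36 * L := by rw [hγ]; field_simp; ring
  have hnoise := noise_term_le hL hμ (Nat.cast_pos.2 hM) (Nat.cast_pos.2 (by omega)) hTκ
    (mul_nonneg hLR (sub_nonneg.2 (Nat.one_le_cast.2 hH))) (σ := σ)
  rw [hc] at hmain
  rw [← hγ] at hnoise
  linarith

/-- Theorem 1, case (a) (strongly convex, bounded variance, `T ≤ 2κ`) in its
deterministic form with explicit constants: with `γ = 1/(6L)` and weights
`w(t) = (1 − μ/(6L))^{−(t+1)}`,
`(1/W) Σ w(t) e(t) ≤ 36L exp(−μT/(6L)) a(0) + 2σ²/(μTM) + 4L_R(H−1)σ²/(3μ²T²)`. -/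
theorem stmt_19 (L μ σ LR : ℝ) (hL : 0 < L) (hμ : 0 < μ) (hσ : 0 < σ)
    (hμL : μ ≤ L) (hLR : 0 ≤ LR)
    (M H : ℕ) (hM : 0 < M) (hH : 0 < H)
    (T : ℕ) (hT : 1 ≤ T) (hTκ : μ * T ≤ 2 * L)
    (γ : ℝ) (hγ : γ = 1 / (6 * L))
    (a e : ℕ → ℝ) (ha : ∀ t, 0 ≤ a t) (he : ∀ t, 0 ≤ e t)
    (hrec : ∀ t < T, γ / 6 * e t ≤ (1 - γ * μ) * a t - a (t + 1)
      + γ ^ 2 * σ ^ 2 / M + 2 * LR * ((H : ℝ) - 1) * γ ^ 3 * σ ^ 2)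
    (w : ℕ → ℝ) (hw : ∀ t, w t = (1 - μ / (6 * L)) ^ (-(t + 1 : ℤ)))
    (W : ℝ) (hW : W = ∑ t ∈ Finset.range T, w t) :
    1 / W * ∑ t ∈ Finset.range T, w t * e t
      ≤ 36 * L * Real.exp (-(μ * T / (6 * L))) * a 0
        + 2 * σ ^ 2 / (μ * T * M)
        + 4 * LR * ((H : ℝ) - 1) * σ ^ 2 / (3 * μ ^ 2 * T ^ 2) :=
  stmt_19_general L μ σ LR hL hμ hμL hLR M H hM hH T hT hTκ γ hγ a e ha hrec w hw W hW
end
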